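/- arXiv:2304.04174 — 9 statements merged into one kernel-verified Lean document; each statement's English description precedes it below -/
import Mathlib

section
/- Let A be a real symmetric n×n matrix and X a nonzero positive semidefinite real symmetric n×n matrix of rank r. Then there exist vectors x_1,...,x_r ∈ ℝ^n with X = Σ_{k=1}^r x_k x_k^T and, for every k, r·(x_k^T A x_k) = tr(A X). -/
/-!
Write `X = ∑ yᵢ yᵢᵀ` with `r` vectors from the spectral decomposition and let
`c = tr(A X) / r`, the mean of the values `yᵢᵀ A yᵢ`. If these are not all equal to `c`, one is
below and one above. Rotating the pair in its plane, `(a, b) ↦ (cos θ a + sin θ b,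
-sin θ a + cos θ b)`, keeps `a aᵀ + b bᵀ`, and by the intermediate value theorem some `θ` gives the
first vector the value exactly `c`. Setting that vector aside and repeating on the remaining
`r - 1` vectors, whose values still average to `c` since `yᵀ A y = tr (A y yᵀ)`, proves the
theorem by induction.
-/

open Matrix

namespace Multiset

theorem exists_lt_and_exists_gt_of_sum_map_eq {ι M : Type*} [AddCommMonoid M]
    [LinearOrder M] [IsOrderedCancelAddMonoid M] {s : Multiset ι} {f : ι → M} {c : M}
    (hsum : (s.map f).sum = card s • c) (hne : ∃ i ∈ s, f i ≠ c) :
    (∃ i ∈ s, f i < c) ∧ ∃ i ∈ s, c < f i := by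
  obtain ⟨i, hi, hic⟩ := hne
  have hconst : (s.map fun _ => c).sum = card s • c := by
    rw [map_const', sum_replicate]
  constructor
  · by_contra! h
    have := sum_lt_sum h ⟨i, hi, (h i hi).lt_of_ne' hic⟩
    rw [hconst, hsum] at this
    exact this.false
  · by_contra! h
    have := sum_lt_sum h ⟨i, hi, (h i hi).lt_of_ne hic⟩
    rw [hconst, hsum] at this
    exact this.false

theorem exists_fin_map_eq {α : Type*} {r : ℕ} (t : Multiset α) (ht : card t = r) :
    ∃ f : Fin r → α, Finset.univ.val.map f = t := by
  obtain ⟨l⟩ := t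
  rw [quot_mk_to_coe'', coe_card] at ht
  subst ht
  exact ⟨l.get, by rw [Fin.univ_val_map, List.ofFn_get, quot_mk_to_coe'']⟩

end Multiset

namespace Matrix

theorem vecMulVec_rotate_add_vecMulVec_rotate {n R : Type*} [CommRing R] (a b : n → R)
    {c s : R} (h : c ^ 2 + s ^ 2 = 1) :
    vecMulVec (c • a + s • b) (c • a + s • b) + vecMulVec (-s • a + c • b) (-s • a + c • b)
      = vecMulVec a a + vecMulVec b b := by
  ext i j
  simp only [add_apply, vecMulVec_apply, Pi.add_apply, Pi.smul_apply, smul_eq_mul]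
  linear_combination (a i * a j + b i * b j) * h

variable {n : Type*} [Fintype n]

theorem trace_mul_vecMulVec_self {R : Type*} [CommSemiring R] (A : Matrix n n R) (x : n → R) :
    (A * vecMulVec x x).trace = x ⬝ᵥ A *ᵥ x := by
  simp only [trace, diag, mul_apply, vecMulVec_apply, dotProduct, mulVec, Finset.mul_sum]
  exact Finset.sum_congr rfl fun i _ => Finset.sum_congr rfl fun j _ => by ring

theorem trace_mul_multiset_sum_vecMulVec {R : Type*} [CommSemiring R] (A : Matrix n n R)
    (s : Multiset (n → R)) :
    (A * (s.map fun v => vecMulVec v v).sum).trace = (s.map fun v => v ⬝ᵥ A *ᵥ v).sum := by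
  rw [← Multiset.sum_map_mul_left, trace_multiset_sum, Multiset.map_map]
  exact congrArg Multiset.sum (Multiset.map_congr rfl fun v _ => trace_mul_vecMulVec_self A v)

theorem mul_diagonal_mul_transpose_eq_sum_smul_vecMulVec [DecidableEq n] {R : Type*}
    [CommSemiring R] (U : Matrix n n R) (d : n → R) :
    U * diagonal d * Uᵀ = ∑ i, d i • vecMulVec (Uᵀ i) (Uᵀ i) := by
  ext p q
  rw [mul_apply]
  simp only [mul_diagonal, transpose_apply, Matrix.sum_apply, smul_apply,
    vecMulVec_apply, smul_eq_mul]
  exact Finset.sum_congr rfl fun _ _ => by ring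

theorem PosSemidef.exists_multiset_card_eq_rank_sum_vecMulVec_eq {X : Matrix n n ℝ}
    (hX : X.PosSemidef) :
    ∃ s : Multiset (n → ℝ), s.card = X.rank ∧ (s.map fun v => vecMulVec v v).sum = X := by
  classical
  let μ := hX.1.eigenvalues
  let U : Matrix n n ℝ := hX.1.eigenvectorUnitary
  let y (i : n) : n → ℝ := √(μ i) • Uᵀ i
  have hX_eq : X = ∑ i, vecMulVec (y i) (y i) := by
    have hvv (i : n) :
        vecMulVec (y i) (y i) = μ i • vecMulVec (Uᵀ i) (Uᵀ i) := by
      rw [smul_vecMulVec, vecMulVec_smul, smul_smul, Real.mul_self_sqrt (hX.eigenvalues_nonneg i)]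
    have hμ : RCLike.ofReal ∘ μ = μ := rfl
    have hspec := hX.1.spectral_theorem
    rw [Unitary.conjStarAlgAut_apply, star_eq_conjTranspose,
      conjTranspose_eq_transpose_of_trivial, hμ] at hspec
    simp_rw [hvv, ← mul_diagonal_mul_transpose_eq_sum_smul_vecMulVec]
    exact hspec
  refine ⟨(Finset.univ.filter fun i => μ i ≠ 0).val.map y, ?_, ?_⟩
  · rw [Multiset.card_map, Finset.card_val, hX.1.rank_eq_card_non_zero_eigs, Fintype.card_subtype]
  · rw [Multiset.map_map, ← Finset.sum_eq_multiset_sum, hX_eq]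
    refine Finset.sum_filter_of_ne fun i _ hi hμ => hi ?_
    simp [y, hμ]
theorem exists_vecMulVec_add_eq_and_dotProduct_mulVec_eq (A : Matrix n n ℝ) {a b : n → ℝ}
    {c : ℝ} (ha : a ⬝ᵥ A *ᵥ a ≤ c) (hb : c ≤ b ⬝ᵥ A *ᵥ b) :
    ∃ p w : n → ℝ, vecMulVec p p + vecMulVec w w = vecMulVec a a + vecMulVec b b ∧
      p ⬝ᵥ A *ᵥ p = c := by
  let rotate (θ : ℝ) : n → ℝ := Real.cos θ • a + Real.sin θ • b
  have hcont : Continuous fun θ => rotate θ ⬝ᵥ A *ᵥ rotate θ := by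
    unfold rotate; fun_prop
  obtain ⟨θ, -, hθ⟩ := intermediate_value_Icc (by positivity : (0 : ℝ) ≤ Real.pi / 2)
    hcont.continuousOn (by simpa [rotate] using And.intro ha hb)
  exact ⟨rotate θ, _, vecMulVec_rotate_add_vecMulVec_rotate a b (Real.cos_sq_add_sin_sq θ), hθ⟩

theorem exists_multiset_sum_vecMulVec_eq_of_sum_eq (A : Matrix n n ℝ) (c : ℝ)
    (s : Multiset (n → ℝ)) (hs : (s.map fun v => v ⬝ᵥ A *ᵥ v).sum = s.card • c) :
    ∃ t : Multiset (n → ℝ), t.card = s.card ∧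
      (t.map fun v => vecMulVec v v).sum = (s.map fun v => vecMulVec v v).sum ∧
      ∀ v ∈ t, v ⬝ᵥ A *ᵥ v = c := by
  induction hm : s.card generalizing s with
  | zero => exact ⟨s, hm, rfl, by simp [Multiset.card_eq_zero.1 hm]⟩
  | succ m ih =>
    by_cases hall : ∀ v ∈ s, v ⬝ᵥ A *ᵥ v = c
    · exact ⟨s, hm, rfl, hall⟩
    push Not at hall
    obtain ⟨⟨a, ha, hac⟩, b, hb, hcb⟩ := Multiset.exists_lt_and_exists_gt_of_sum_map_eq hs hall
    obtain ⟨u, rfl⟩ : ∃ u, s = a ::ₘ b ::ₘ u := by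
      obtain ⟨s', rfl⟩ := Multiset.exists_cons_of_mem ha
      have hba : b ≠ a := by rintro rfl; exact (hac.trans hcb).false
      obtain ⟨u, rfl⟩ := Multiset.exists_cons_of_mem ((Multiset.mem_cons.1 hb).resolve_left hba)
      exact ⟨u, rfl⟩
    obtain ⟨p, w, hpw, hp⟩ := exists_vecMulVec_add_eq_and_dotProduct_mulVec_eq A hac.le hcb.le
    have hq : p ⬝ᵥ A *ᵥ p + w ⬝ᵥ A *ᵥ w = a ⬝ᵥ A *ᵥ a + b ⬝ᵥ A *ᵥ b := by
      simpa only [mul_add, trace_add, trace_mul_vecMulVec_self] using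
        congrArg (fun M => (A * M).trace) hpw
    have hsum : ((w ::ₘ u).map fun v => v ⬝ᵥ A *ᵥ v).sum = (w ::ₘ u).card • c := by
      simp only [Multiset.card_cons, Multiset.map_cons, Multiset.sum_cons, nsmul_eq_mul] at hs ⊢
      push_cast at hs ⊢
      linarith
    obtain ⟨t, ht_card, ht_sum, ht_eq⟩ := ih (w ::ₘ u) hsum (by simpa using hm)
    refine ⟨p ::ₘ t, by simp [ht_card], ?_, ?_⟩
    · simp only [Multiset.map_cons, Multiset.sum_cons, ht_sum]
      rw [← add_assoc, hpw, add_assoc]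
    · rintro v hv
      rcases Multiset.mem_cons.1 hv with rfl | hv
      exacts [hp, ht_eq v hv]

theorem exists_multiset_sum_vecMulVec_eq_forall_card_mul_eq (A : Matrix n n ℝ)
    (s : Multiset (n → ℝ)) :
    ∃ t : Multiset (n → ℝ), t.card = s.card ∧
      (t.map fun v => vecMulVec v v).sum = (s.map fun v => vecMulVec v v).sum ∧
      ∀ v ∈ t, (s.card : ℝ) * (v ⬝ᵥ A *ᵥ v) = (s.map fun v => v ⬝ᵥ A *ᵥ v).sum := by
  obtain hs | hs := eq_or_ne (s.card : ℝ) 0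
  · exact ⟨s, rfl, rfl, by simp [Multiset.card_eq_zero.1 (Nat.cast_eq_zero.1 hs)]⟩
  obtain ⟨t, ht_card, ht_sum, ht_eq⟩ := exists_multiset_sum_vecMulVec_eq_of_sum_eq A
    ((s.map fun v => v ⬝ᵥ A *ᵥ v).sum / s.card) s (by rw [nsmul_eq_mul, mul_div_cancel₀ _ hs])
  exact ⟨t, ht_card, ht_sum, fun v hv => by rw [ht_eq v hv, mul_div_cancel₀ _ hs]⟩

end Matrix

theorem stmt_0_general (n r : ℕ) (A X : Matrix (Fin n) (Fin n) ℝ)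
    (hX : X.PosSemidef) (hr : X.rank = r) :
    ∃ x : Fin r → (Fin n → ℝ),
      X = ∑ k, vecMulVec (x k) (x k) ∧
      ∀ k, (r : ℝ) * (x k ⬝ᵥ A.mulVec (x k)) = (A * X).trace := by
  obtain ⟨s, hs_card, hs_sum⟩ := hX.exists_multiset_card_eq_rank_sum_vecMulVec_eq
  obtain ⟨t, ht_card, ht_sum, ht_eq⟩ := exists_multiset_sum_vecMulVec_eq_forall_card_mul_eq A s
  rw [hs_card, hr, ← trace_mul_multiset_sum_vecMulVec, hs_sum] at ht_eq
  obtain ⟨x, rfl⟩ := t.exists_fin_map_eq (ht_card.trans (hs_card.trans hr))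
  refine ⟨x, ?_, fun k => ht_eq _ (Multiset.mem_map_of_mem _ (Finset.mem_univ k))⟩
  rw [← hs_sum, ← ht_sum, Multiset.map_map, Finset.sum_eq_multiset_sum]
  rfl

theorem stmt_0 (n r : ℕ) (A X : Matrix (Fin n) (Fin n) ℝ)
    (hA : A.IsSymm) (hX : X.PosSemidef) (hX0 : X ≠ 0) (hr : X.rank = r) :
    ∃ x : Fin r → (Fin n → ℝ),
      X = ∑ k, vecMulVec (x k) (x k) ∧
      ∀ k, (r : ℝ) * (x k ⬝ᵥ A.mulVec (x k)) = (A * X).trace :=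
  stmt_0_general n r A X hX hr
end

section
/- Let A_1, A_2 be complex Hermitian n×n matrices and X a nonzero positive semidefinite Hermitian n×n matrix of rank r. Then there exist vectors x_1,...,x_r ∈ ℂ^n with X = Σ_{k=1}^r x_k x_k^H and, for every k, r·(x_k^H A_1 x_k) = tr(A_1 X) and r·(x_k^H A_2 x_k) = tr(A_2 X). -/
/-!
Put `A := A₁ + i • A₂`; since `xᴴ A₁ x`, `xᴴ A₂ x` and the traces are real, the two conditions
together say `r · x_kᴴ A x_k = tr (A X)`. The spectral theorem writes `X = ∑ y_k y_kᴴ` with one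
vector per nonzero eigenvalue. By the Toeplitz–Hausdorff theorem the numerical range of the Gram
matrix `G = (y_jᴴ A y_k)` is convex, so it contains the mean `tr G / r` of its diagonal, attained at
a unit vector `c`. Mixing the family `y` by a unitary matrix whose first column is `c` leaves
`∑ y_k y_kᴴ` (hence `tr (A X)`) unchanged and makes the first value equal to the mean; induction on
the number of vectors does the rest.
-/

open Matrix ComplexOrder

theorem Complex.exists_conj_mul_self_eq_one_and_conj_mul_add_mul_eq_ofReal (a b : ℂ) :
    ∃ γ : ℂ, starRingEnd ℂ γ * γ = 1 ∧ ∃ κ : ℝ, starRingEnd ℂ γ * a + γ * b = κ := by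
  set γ := exp ((a - starRingEnd ℂ b).arg * I)
  have hγ : starRingEnd ℂ γ * γ = 1 := by
    rw [mul_comm, mul_conj, normSq_eq_norm_sq, norm_exp_ofReal_mul_I]
    norm_num
  have hz : (‖a - starRingEnd ℂ b‖ : ℂ) * γ = a - starRingEnd ℂ b := norm_mul_exp_arg_mul_I _
  refine ⟨γ, hγ, ‖a - starRingEnd ℂ b‖ + 2 * (γ * b).re, ?_⟩
  rw [ofReal_add, ← add_conj, map_mul]
  linear_combination (starRingEnd ℂ γ) * hz.symm + ‖a - starRingEnd ℂ b‖ * hγ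

theorem Complex.eq_and_eq_of_add_I_mul_eq {a b c d : ℂ} (ha : a.im = 0) (hb : b.im = 0)
    (hc : c.im = 0) (hd : d.im = 0) (h : a + I * b = c + I * d) : a = c ∧ b = d := by
  have hre := congrArg re h
  have him := congrArg im h
  simp only [add_re, add_im, mul_re, mul_im, I_re, I_im] at hre him
  exact ⟨ext (by linarith) (by linarith), ext (by linarith) (by linarith)⟩

namespace Matrix

section NumericalRange

variable {n : Type*} [Fintype n]

def numericalRange (B : Matrix n n ℂ) : Set ℂ :=
  {z | ∃ x : n → ℂ, star x ⬝ᵥ x = 1 ∧ star x ⬝ᵥ B *ᵥ x = z}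

theorem star_smul_dotProduct_mulVec_smul (B : Matrix n n ℂ) (c : ℂ) (x : n → ℂ) :
    star (c • x) ⬝ᵥ B *ᵥ (c • x) = starRingEnd ℂ c * c * (star x ⬝ᵥ B *ᵥ x) := by
  simp only [star_smul, mulVec_smul, smul_dotProduct, dotProduct_smul, smul_eq_mul,
    Complex.star_def]
  ring

theorem star_add_dotProduct_mulVec_add (B : Matrix n n ℂ) (x y : n → ℂ) :
    star (x + y) ⬝ᵥ B *ᵥ (x + y) =
      star x ⬝ᵥ B *ᵥ x + (star x ⬝ᵥ B *ᵥ y + star y ⬝ᵥ B *ᵥ x) + star y ⬝ᵥ B *ᵥ y := by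
  simp only [star_add, mulVec_add, add_dotProduct, dotProduct_add]
  ring

theorem star_ofReal_smul_add_dotProduct_mulVec (B : Matrix n n ℂ) (a b : ℝ) (x y : n → ℂ) :
    star ((a : ℂ) • x + (b : ℂ) • y) ⬝ᵥ B *ᵥ ((a : ℂ) • x + (b : ℂ) • y) =
      a ^ 2 * (star x ⬝ᵥ B *ᵥ x) + a * b * (star x ⬝ᵥ B *ᵥ y + star y ⬝ᵥ B *ᵥ x)
        + b ^ 2 * (star y ⬝ᵥ B *ᵥ y) := by
  simp only [star_add_dotProduct_mulVec_add, star_smul, mulVec_smul, smul_dotProduct,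
    dotProduct_smul, smul_eq_mul, Complex.star_def, Complex.conj_ofReal]
  ring

theorem star_dotProduct_mulVec_div_mem_numericalRange (B : Matrix n n ℂ) {x : n → ℂ}
    (hx : x ≠ 0) : (star x ⬝ᵥ B *ᵥ x) / (star x ⬝ᵥ x) ∈ numericalRange B := by
  obtain ⟨N, hN0, hN⟩ := RCLike.pos_iff_exists_ofReal.mp (dotProduct_star_self_pos_iff.mpr hx)
  have hsq : (√N : ℂ) ^ 2 = N := by exact_mod_cast Real.sq_sqrt hN0.le
  have hne : (√N : ℂ) ≠ 0 := by exact_mod_cast (Real.sqrt_pos.mpr hN0).ne'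
  refine ⟨((√N)⁻¹ : ℂ) • x, ?_, ?_⟩ <;>
  · simp only [star_smul, mulVec_smul, smul_dotProduct, dotProduct_smul, smul_eq_mul, ← hN,
      Complex.star_def, map_inv₀, Complex.conj_ofReal]
    field_simp
    simp [hsq, mul_comm]

theorem ofReal_smul_add_ofReal_smul_ne_zero {B : Matrix n n ℂ} {u v : n → ℂ} (hv : v ≠ 0)
    (hBu : star u ⬝ᵥ B *ᵥ u = 1) (hBv : star v ⬝ᵥ B *ᵥ v = 0) (s : ℝ) :
    ((1 - s : ℝ) : ℂ) • u + (s : ℂ) • v ≠ 0 := by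
  intro h0
  have h := congrArg (fun x => star x ⬝ᵥ B *ᵥ x) (eq_neg_of_add_eq_zero_left h0)
  simp only [star_neg, mulVec_neg, dotProduct_neg, neg_dotProduct, neg_neg,
    star_smul_dotProduct_mulVec_smul, hBu, hBv, Complex.conj_ofReal] at h
  obtain rfl : s = 1 := by
    have : (1 - s) ^ 2 = 0 := by
      exact_mod_cast (by linear_combination h : ((1 - s : ℝ) : ℂ) ^ 2 = 0)
    linarith [pow_eq_zero_iff (n := 2) two_ne_zero |>.mp this]
  exact hv (by simpa using h0)

theorem ofReal_mem_numericalRange_of_eq_one_of_eq_zero {B : Matrix n n ℂ} {u v : n → ℂ}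
    (hu : star u ⬝ᵥ u = 1) (hv : star v ⬝ᵥ v = 1)
    (hBu : star u ⬝ᵥ B *ᵥ u = 1) (hBv : star v ⬝ᵥ B *ᵥ v = 0) {t : ℝ} (ht : t ∈ Set.Icc 0 1) :
    (t : ℂ) ∈ numericalRange B := by
  classical
  -- rotate `u` by a phase so that the cross term of `B` between `u` and `v` becomes real
  obtain ⟨γ, hγ, κ, hγκ⟩ := Complex.exists_conj_mul_self_eq_one_and_conj_mul_add_mul_eq_ofReal
    (star u ⬝ᵥ B *ᵥ v) (star v ⬝ᵥ B *ᵥ u)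
  set u' := γ • u
  have hu' : star u' ⬝ᵥ u' = 1 := by
    have h := star_smul_dotProduct_mulVec_smul 1 γ u
    rwa [one_mulVec, one_mulVec, hu, hγ, mul_one] at h
  have hBu' : star u' ⬝ᵥ B *ᵥ u' = 1 := by
    rw [star_smul_dotProduct_mulVec_smul, hBu, hγ, one_mul]
  have hκ : star u' ⬝ᵥ B *ᵥ v + star v ⬝ᵥ B *ᵥ u' = κ := by
    simpa [u', star_smul, mulVec_smul, smul_dotProduct, dotProduct_smul] using hγκ
  obtain ⟨η, hη⟩ : ∃ η : ℝ, star u' ⬝ᵥ v + star v ⬝ᵥ u' = η := by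
    refine Complex.conj_eq_iff_real.mp ?_
    rw [star_dotProduct v, map_add, ← Complex.star_def, star_star, add_comm]
  -- along the segment from `u'` to `v` both forms are real quadratic polynomials
  let p : ℝ → n → ℂ := fun s => ((1 - s : ℝ) : ℂ) • u' + (s : ℂ) • v
  have hBp (s : ℝ) : star (p s) ⬝ᵥ B *ᵥ p s = ((1 - s) ^ 2 + (1 - s) * s * κ : ℝ) := by
    rw [star_ofReal_smul_add_dotProduct_mulVec, hBu', hBv, hκ]
    push_cast
    ring
  have hp (s : ℝ) : star (p s) ⬝ᵥ p s = ((1 - s) ^ 2 + (1 - s) * s * η + s ^ 2 : ℝ) := by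
    have h := star_ofReal_smul_add_dotProduct_mulVec 1 (1 - s) s u' v
    simp only [one_mulVec] at h
    rw [h, hu', hv, hη]
    push_cast
    ring
  obtain ⟨s, -, hst⟩ : ∃ s ∈ Set.Icc (0 : ℝ) 1,
      (1 - s) ^ 2 + (1 - s) * s * κ - t * ((1 - s) ^ 2 + (1 - s) * s * η + s ^ 2) = 0 :=
    intermediate_value_Icc' zero_le_one (by fun_prop) ⟨by simpa using ht.1, by simpa using ht.2⟩
  have hps : p s ≠ 0 :=
    ofReal_smul_add_ofReal_smul_ne_zero (by rintro rfl; simp at hv) hBu' hBv s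
  convert star_dotProduct_mulVec_div_mem_numericalRange B hps using 1
  rw [eq_div_iff (mt dotProduct_star_self_eq_zero.mp hps), hBp, hp]
  exact_mod_cast (by linarith : t * ((1 - s) ^ 2 + (1 - s) * s * η + s ^ 2) =
    (1 - s) ^ 2 + (1 - s) * s * κ)

/-- The **Toeplitz–Hausdorff theorem**. -/
theorem convex_numericalRange (B : Matrix n n ℂ) : Convex ℝ (numericalRange B) := by
  classical
  rintro _ ⟨u, hu, rfl⟩ _ ⟨v, hv, rfl⟩ a b ha hb hab
  set α := star u ⬝ᵥ B *ᵥ u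
  set β := star v ⬝ᵥ B *ᵥ v
  rcases eq_or_ne α β with hαβ | hαβ
  · exact ⟨u, hu, by rw [← hαβ, ← add_smul, hab, one_smul]⟩
  -- the affine change `B ↦ (α - β)⁻¹ • (B - β • 1)` moves `α` to `1` and `β` to `0`
  have hsub : α - β ≠ 0 := sub_ne_zero.mpr hαβ
  have hQ (x : n → ℂ) : star x ⬝ᵥ ((α - β)⁻¹ • (B - β • 1)) *ᵥ x =
      (α - β)⁻¹ * (star x ⬝ᵥ B *ᵥ x - β * (star x ⬝ᵥ x)) := by
    simp only [smul_mulVec, sub_mulVec, one_mulVec, dotProduct_smul, dotProduct_sub, smul_eq_mul]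
  obtain ⟨w, hw, hQw⟩ := ofReal_mem_numericalRange_of_eq_one_of_eq_zero
    (B := (α - β)⁻¹ • (B - β • 1)) hu hv (by rw [hQ, hu, mul_one]; exact inv_mul_cancel₀ hsub)
    (by rw [hQ, hv]; simp [β]) ⟨ha, by linarith⟩
  refine ⟨w, hw, ?_⟩
  rw [hQ, hw, mul_one, inv_mul_eq_iff_eq_mul₀ hsub] at hQw
  obtain rfl : b = 1 - a := by linarith
  rw [Complex.real_smul, Complex.real_smul]
  push_cast
  linear_combination hQw

theorem trace_div_card_mem_numericalRange [Nonempty n] (B : Matrix n n ℂ) :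
    B.trace / Fintype.card n ∈ numericalRange B := by
  classical
  have hdiag (i : n) : B i i ∈ numericalRange B := ⟨Pi.single i 1, by simp, by simp⟩
  have := (convex_numericalRange B).sum_mem (t := Finset.univ)
    (w := fun _ => (Fintype.card n : ℝ)⁻¹) (fun _ _ => by positivity)
    (by simp [Finset.card_univ]) (fun i _ => hdiag i)
  convert this using 1
  simp [trace, Complex.real_smul, Finset.mul_sum, div_eq_inv_mul]

end NumericalRange

section Families

variable {n ι R : Type*} [CommRing R] [StarRing R]

theorem sum_vecMulVec_star_eq [Fintype ι] (y : Matrix ι n R) :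
    ∑ k, vecMulVec (y k) (star (y k)) = yᵀ * yᵀᴴ := by
  ext p q
  simp [mul_apply, vecMulVec_apply, Matrix.sum_apply]

theorem trace_mul_vecMulVec_star [Fintype n] (A : Matrix n n R) (u : n → R) :
    (A * vecMulVec u (star u)).trace = star u ⬝ᵥ A *ᵥ u := by
  rw [mul_vecMulVec, trace_vecMulVec, dotProduct_comm]

theorem trace_mul_sum_vecMulVec_star [Fintype n] [Fintype ι] (A : Matrix n n R)
    (y : ι → n → R) :
    (A * ∑ k, vecMulVec (y k) (star (y k))).trace = ∑ k, star (y k) ⬝ᵥ A *ᵥ y k := by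
  simp [Matrix.mul_sum, trace_sum, trace_mul_vecMulVec_star]

theorem sum_vecMulVec_star_transpose_mul [Fintype ι] [DecidableEq ι] {U : Matrix ι ι R}
    (hU : U ∈ unitaryGroup ι R) (y : Matrix ι n R) :
    ∑ k, vecMulVec ((Uᵀ * y) k) (star ((Uᵀ * y) k)) = ∑ k, vecMulVec (y k) (star (y k)) := by
  rw [sum_vecMulVec_star_eq, sum_vecMulVec_star_eq, transpose_mul, transpose_transpose,
    conjTranspose_mul, Matrix.mul_assoc, ← Matrix.mul_assoc U, ← star_eq_conjTranspose,
    mem_unitaryGroup_iff.mp hU, Matrix.one_mul]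

theorem star_mulVec_dotProduct_mulVec_mulVec [Fintype n] [Fintype ι] (A : Matrix n n R)
    (M : Matrix n ι R) (c : ι → R) :
    star (M *ᵥ c) ⬝ᵥ A *ᵥ (M *ᵥ c) = star c ⬝ᵥ (Mᴴ * A * M) *ᵥ c := by
  simp only [star_mulVec, dotProduct_mulVec, vecMul_vecMul]

theorem exists_mem_unitaryGroup_transpose_apply_eq [Fintype ι] [DecidableEq ι] (i : ι)
    {c : ι → ℂ} (hc : star c ⬝ᵥ c = 1) : ∃ U ∈ unitaryGroup ι ℂ, Uᵀ i = c := by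
  have hnorm : ‖WithLp.toLp 2 c‖ = 1 := by
    rw [norm_eq_sqrt_re_inner (𝕜 := ℂ), EuclideanSpace.inner_eq_star_dotProduct, dotProduct_comm,
      hc]
    simp
  obtain ⟨b, hb⟩ := Orthonormal.exists_orthonormalBasis_extension_of_card_eq (𝕜 := ℂ)
    (v := fun _ => WithLp.toLp 2 c) (s := {i}) (by simp)
    ⟨fun _ => hnorm, fun j k hjk => absurd (Subsingleton.elim j k) hjk⟩
  exact ⟨_, (EuclideanSpace.basisFun ι ℂ).toMatrix_orthonormalBasis_mem_unitary b,
    congrArg WithLp.ofLp (hb i rfl)⟩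

theorem exists_sum_vecMulVec_star_eq_and_apply_eq [Fintype n] [Fintype ι] [DecidableEq ι]
    (A : Matrix n n ℂ) (y : Matrix ι n ℂ) (i : ι) :
    ∃ z : Matrix ι n ℂ,
      ∑ k, vecMulVec (z k) (star (z k)) = ∑ k, vecMulVec (y k) (star (y k)) ∧
      star (z i) ⬝ᵥ A *ᵥ z i = (A * ∑ k, vecMulVec (y k) (star (y k))).trace / Fintype.card ι := by
  have : Nonempty ι := ⟨i⟩
  obtain ⟨c, hc, hGc⟩ := trace_div_card_mem_numericalRange (yᵀᴴ * A * yᵀ)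
  obtain ⟨U, hU, hUc⟩ := exists_mem_unitaryGroup_transpose_apply_eq i hc
  refine ⟨Uᵀ * y, sum_vecMulVec_star_transpose_mul hU y, ?_⟩
  rw [mul_apply_eq_vecMul, ← mulVec_transpose, star_mulVec_dotProduct_mulVec_mulVec, hUc, hGc,
    sum_vecMulVec_star_eq, trace_mul_cycle, trace_mul_comm]

theorem exists_sum_vecMulVec_star_eq_and_forall_eq [Fintype n] (A : Matrix n n ℂ) {r : ℕ}
    (y : Fin r → n → ℂ) {μ : ℂ} (hμ : (A * ∑ k, vecMulVec (y k) (star (y k))).trace = r * μ) :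
    ∃ x : Fin r → n → ℂ,
      ∑ k, vecMulVec (x k) (star (x k)) = ∑ k, vecMulVec (y k) (star (y k)) ∧
      ∀ k, star (x k) ⬝ᵥ A *ᵥ x k = μ := by
  induction r with
  | zero => exact ⟨y, rfl, fun k => k.elim0⟩
  | succ r ih =>
    obtain ⟨z, hzy, hz0⟩ := exists_sum_vecMulVec_star_eq_and_apply_eq A y 0
    rw [hμ, Fintype.card_fin, mul_div_cancel_left₀ _ (Nat.cast_ne_zero.mpr r.succ_ne_zero)] at hz0
    obtain ⟨x, hx, hxμ⟩ := ih (fun k => z k.succ) <| by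
      rw [← hzy, Fin.sum_univ_succ, Matrix.mul_add, trace_add, trace_mul_vecMulVec_star, hz0]
        at hμ
      push_cast at hμ
      linear_combination hμ
    refine ⟨Fin.cons (z 0) x, ?_, Fin.cases hz0 hxμ⟩
    rw [Fin.sum_univ_succ, ← hzy, Fin.sum_univ_succ]
    simp [hx]

theorem exists_sum_vecMulVec_star_eq_and_forall_natCast_mul_eq [Fintype n] (A : Matrix n n ℂ)
    {r : ℕ} (y : Fin r → n → ℂ) :
    ∃ x : Fin r → n → ℂ,
      ∑ k, vecMulVec (x k) (star (x k)) = ∑ k, vecMulVec (y k) (star (y k)) ∧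
      ∀ k, r * (star (x k) ⬝ᵥ A *ᵥ x k) = (A * ∑ k, vecMulVec (y k) (star (y k))).trace := by
  rcases Nat.eq_zero_or_pos r with rfl | hr
  · exact ⟨y, rfl, fun k => k.elim0⟩
  have hr' : (r : ℂ) ≠ 0 := Nat.cast_ne_zero.mpr hr.ne'
  obtain ⟨x, hxy, hx⟩ := exists_sum_vecMulVec_star_eq_and_forall_eq A y
    (mul_div_cancel₀ _ hr').symm
  exact ⟨x, hxy, fun k => by rw [hx k, mul_div_cancel₀ _ hr']⟩

theorem PosSemidef.exists_sum_vecMulVec_star_of_rank_eq {𝕜 : Type*} [RCLike 𝕜] [Fintype n]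
    [DecidableEq n] {X : Matrix n n 𝕜} (hX : X.PosSemidef) {r : ℕ} (hr : X.rank = r) :
    ∃ y : Fin r → n → 𝕜, X = ∑ k, vecMulVec (y k) (star (y k)) := by
  set ev := hX.isHermitian.eigenvalues
  -- the rows of `w` are the eigenvectors scaled by the square roots of their eigenvalues
  set w : Matrix n n 𝕜 :=
    ((hX.isHermitian.eigenvectorUnitary : Matrix n n 𝕜) * diagonal fun i => (√(ev i) : 𝕜))ᵀ
  have hXw : X = ∑ i, vecMulVec (w i) (star (w i)) := by
    rw [sum_vecMulVec_star_eq, transpose_transpose, conjTranspose_mul, diagonal_conjTranspose,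
      Matrix.mul_assoc, ← Matrix.mul_assoc (diagonal _), diagonal_mul_diagonal]
    have hsq : (fun i => (√(ev i) : 𝕜) * star (√(ev i) : 𝕜)) = RCLike.ofReal ∘ ev := by
      ext i
      simp [← RCLike.ofReal_mul, Real.mul_self_sqrt (hX.eigenvalues_nonneg i), ev]
    simp only [Pi.star_apply]
    rw [hsq, ← Matrix.mul_assoc]
    exact hX.isHermitian.spectral_theorem
  have hw (i : n) (hi : ev i = 0) : w i = 0 := by
    ext j
    simp [w, hi]
  obtain ⟨e⟩ : Nonempty (Fin r ≃ {i // ev i ≠ 0}) := by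
    rw [← Fintype.card_eq, Fintype.card_fin, ← hr, hX.isHermitian.rank_eq_card_non_zero_eigs]
  refine ⟨fun k => w (e k), ?_⟩
  rw [hXw, ← Fintype.sum_subtype_add_sum_subtype (fun i => ev i ≠ 0),
    Fintype.sum_eq_zero (fun i : {i // ¬ev i ≠ 0} => _) fun i => by simp [hw i (not_not.mp i.2)],
    add_zero, ← e.sum_comp]

end Families

end Matrix

theorem stmt_1_general (n r : ℕ) (A₁ A₂ X : Matrix (Fin n) (Fin n) ℂ)
    (hA₁ : A₁.IsHermitian) (hA₂ : A₂.IsHermitian)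
    (hX : X.PosSemidef) (hr : X.rank = r) :
    ∃ x : Fin r → (Fin n → ℂ),
      X = ∑ k, vecMulVec (x k) (star (x k)) ∧
      ∀ k, (r : ℂ) * (star (x k) ⬝ᵥ A₁.mulVec (x k)) = (A₁ * X).trace ∧
           (r : ℂ) * (star (x k) ⬝ᵥ A₂.mulVec (x k)) = (A₂ * X).trace := by
  obtain ⟨y, rfl⟩ := hX.exists_sum_vecMulVec_star_of_rank_eq hr
  obtain ⟨x, hxy, hx⟩ :=
    exists_sum_vecMulVec_star_eq_and_forall_natCast_mul_eq (A₁ + Complex.I • A₂) y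
  refine ⟨x, hxy.symm, fun k => ?_⟩
  rw [← hxy]
  have him {A : Matrix (Fin n) (Fin n) ℂ} (hA : A.IsHermitian) :
      ((r : ℂ) * (star (x k) ⬝ᵥ A *ᵥ x k)).im = 0 ∧
        (A * ∑ j, vecMulVec (x j) (star (x j))).trace.im = 0 := by
    simp only [trace_mul_sum_vecMulVec_star, Complex.im_sum, Complex.mul_im,
      Complex.natCast_im, Complex.natCast_re]
    simp [show ∀ v, (star v ⬝ᵥ A *ᵥ v).im = 0 from hA.im_star_dotProduct_mulVec_self]
  refine Complex.eq_and_eq_of_add_I_mul_eq (him hA₁).1 (him hA₂).1 (him hA₁).2 (him hA₂).2 ?_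
  have := hx k
  rw [← hxy, add_mulVec, smul_mulVec, dotProduct_add, dotProduct_smul, Matrix.add_mul,
    Matrix.smul_mul, trace_add, trace_smul, smul_eq_mul, smul_eq_mul] at this
  linear_combination this

theorem stmt_1 (n r : ℕ) (A₁ A₂ X : Matrix (Fin n) (Fin n) ℂ)
    (hA₁ : A₁.IsHermitian) (hA₂ : A₂.IsHermitian)
    (hX : X.PosSemidef) (hX0 : X ≠ 0) (hr : X.rank = r) :
    ∃ x : Fin r → (Fin n → ℂ),
      X = ∑ k, vecMulVec (x k) (star (x k)) ∧
      ∀ k, (r : ℂ) * (star (x k) ⬝ᵥ A₁.mulVec (x k)) = (A₁ * X).trace ∧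
           (r : ℂ) * (star (x k) ⬝ᵥ A₂.mulVec (x k)) = (A₂ * X).trace :=
  stmt_1_general n r A₁ A₂ X hA₁ hA₂ hX hr
end

section
/- Let A_1, A_2 be real symmetric n×n matrices and let X be a nonzero positive semidefinite real symmetric n×n matrix with (tr(A_1 X), tr(A_2 X)) ≠ (0,0). Then there exists a nonzero vector x in the range of X such that x^T A_1 x = tr(A_1 X) and x^T A_2 x = tr(A_2 X). -/
open Matrix

/-!
Factor `X = Bᵀ B`. Then `tr (A X) = ∑ᵢ bᵢᵀ A bᵢ` over the rows `bᵢ` of `B`, and these rows span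
the range of `Bᵀ`, which equals the range of `X`. So it suffices that joint values of two real
quadratic forms on a subspace are closed under addition (Dines). For two vectors `u, v`, put
`z = p + q i`: twice the value of `Q` at `p • u + q • v` is linear in `ζ = z²` and `‖ζ‖`, so
requiring both forms to take the values `Q u + Q v` is a system `U ζ = (2 - ‖ζ‖) s` with `U` linear
on `ℂ ≅ ℝ²`. Such a system is always solvable: with a kernel vector of norm `2` if `U` is
singular, and by rescaling `U⁻¹ s` otherwise.
-/

theorem LinearMap.exists_apply_eq_sub_norm_smul {E F : Type*} [NormedAddCommGroup E]
    [NormedSpace ℝ E] [FiniteDimensional ℝ E] [AddCommGroup F] [Module ℝ F]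
    [FiniteDimensional ℝ F] (U : E →ₗ[ℝ] F) (hEF : Module.finrank ℝ E = Module.finrank ℝ F)
    (s : F) {c : ℝ} (hc : 0 ≤ c) : ∃ ζ : E, U ζ = (c - ‖ζ‖) • s := by
  by_cases hU : Function.Injective U
  · obtain ⟨g, rfl⟩ := (LinearMap.injective_iff_surjective_of_finrank_eq_finrank hEF).mp hU s
    refine ⟨(c / (1 + ‖g‖)) • g, ?_⟩
    rw [map_smul, norm_smul, Real.norm_of_nonneg (by positivity)]
    congr 1
    field_simp
    ring
  · obtain ⟨v, hv, hv0⟩ : ∃ v, U v = 0 ∧ v ≠ 0 := by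
      simpa [injective_iff_map_eq_zero] using hU
    refine ⟨(c / ‖v‖) • v, ?_⟩
    rw [map_smul, hv, smul_zero, norm_smul, Real.norm_of_nonneg (by positivity),
      div_mul_cancel₀ _ (norm_ne_zero_iff.mpr hv0), sub_self, zero_smul]

namespace QuadraticMap

variable {V : Type*} [AddCommGroup V] [Module ℝ V]

theorem two_mul_map_re_smul_add_im_smul (Q : QuadraticForm ℝ V) (u v : V) (z : ℂ) :
    2 * Q (z.re • u + z.im • v) =
      (Q u + Q v) * ‖z ^ 2‖ + (Q u - Q v) * (z ^ 2).re + polar Q u v * (z ^ 2).im := by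
  rw [norm_pow, Complex.sq_norm, Complex.normSq_apply, pow_two, Complex.mul_re, Complex.mul_im,
    QuadraticMap.map_add Q, QuadraticMap.map_smul, QuadraticMap.map_smul, polar_smul_left,
    polar_smul_right]
  simp only [smul_eq_mul]
  ring

theorem exists_map_smul_add_smul_eq_add (Q₁ Q₂ : QuadraticForm ℝ V) (u v : V) :
    ∃ p q : ℝ, Q₁ (p • u + q • v) = Q₁ u + Q₁ v ∧ Q₂ (p • u + q • v) = Q₂ u + Q₂ v := by
  let ℓ (Q : QuadraticForm ℝ V) : ℂ →ₗ[ℝ] ℝ :=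
    (Q u - Q v) • Complex.reLm + polar Q u v • Complex.imLm
  obtain ⟨ζ, hζ⟩ := ((ℓ Q₁).prod (ℓ Q₂)).exists_apply_eq_sub_norm_smul
    (by simp [Complex.finrank_real_complex]) (Q₁ u + Q₁ v, Q₂ u + Q₂ v) zero_le_two
  obtain ⟨z, rfl⟩ := IsAlgClosed.exists_pow_nat_eq ζ two_pos
  have of_cone (Q : QuadraticForm ℝ V) (h : ℓ Q (z ^ 2) = (2 - ‖z ^ 2‖) * (Q u + Q v)) :
      Q (z.re • u + z.im • v) = Q u + Q v := by
    have hQ := two_mul_map_re_smul_add_im_smul Q u v z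
    simp only [ℓ, LinearMap.add_apply, LinearMap.smul_apply, Complex.reLm_coe,
      Complex.imLm_coe, smul_eq_mul] at h
    linarith
  simp only [Prod.ext_iff, LinearMap.prod_apply, Prod.smul_mk, smul_eq_mul] at hζ
  exact ⟨z.re, z.im, of_cone Q₁ hζ.1, of_cone Q₂ hζ.2⟩

theorem exists_mem_map_eq_sum {ι : Type*} (Q₁ Q₂ : QuadraticForm ℝ V) (W : Submodule ℝ V)
    (s : Finset ι) (v : ι → V) (hv : ∀ i ∈ s, v i ∈ W) :
    ∃ x ∈ W, Q₁ x = ∑ i ∈ s, Q₁ (v i) ∧ Q₂ x = ∑ i ∈ s, Q₂ (v i) := by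
  classical
  induction s using Finset.induction_on with
  | empty => exact ⟨0, W.zero_mem, by simp, by simp⟩
  | insert a s ha ih =>
    obtain ⟨y, hyW, hy₁, hy₂⟩ := ih fun i hi => hv i (Finset.mem_insert_of_mem hi)
    obtain ⟨p, q, h₁, h₂⟩ := exists_map_smul_add_smul_eq_add Q₁ Q₂ (v a) y
    refine ⟨p • v a + q • y,
      W.add_mem (W.smul_mem p (hv a (Finset.mem_insert_self a s))) (W.smul_mem q hyW), ?_, ?_⟩
    · rw [h₁, Finset.sum_insert ha, hy₁]
    · rw [h₂, Finset.sum_insert ha, hy₂]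

end QuadraticMap

namespace Matrix

theorem toQuadraticForm'_apply {n R : Type*} [Fintype n] [DecidableEq n] [CommRing R]
    (M : Matrix n n R) (x : n → R) : M.toQuadraticForm' x = x ⬝ᵥ M *ᵥ x :=
  toLinearMap₂'_apply' M x x

theorem PosSemidef.exists_eq_transpose_mul_self {n : Type*} [Fintype n] {X : Matrix n n ℝ}
    (hX : X.PosSemidef) : ∃ B : Matrix n n ℝ, X = Bᵀ * B := by
  classical
  open scoped MatrixOrder in
  refine ⟨CFC.sqrt X, ?_⟩
  have hB : (CFC.sqrt X)ᴴ = CFC.sqrt X := (CFC.sqrt_nonneg X).posSemidef.1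
  rw [conjTranspose_eq_transpose_of_trivial] at hB
  rw [hB, CFC.sqrt_mul_sqrt_self X hX.nonneg]

theorem trace_mul_transpose_mul_self {m n R : Type*} [Fintype m] [Fintype n] [CommSemiring R]
    (A : Matrix n n R) (B : Matrix m n R) :
    (A * (Bᵀ * B)).trace = ∑ i, B.row i ⬝ᵥ A *ᵥ B.row i := by
  rw [← Matrix.mul_assoc, trace_mul_comm]
  simp [trace, mul_apply, dotProduct, mulVec, Finset.mul_sum, mul_left_comm]

theorem range_mulVecLin_transpose_mul_self {m n R : Type*} [Fintype m] [Fintype n] [Field R]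
    [LinearOrder R] [IsStrictOrderedRing R] (B : Matrix m n R) :
    LinearMap.range (Bᵀ * B).mulVecLin = LinearMap.range Bᵀ.mulVecLin := by
  refine Submodule.eq_of_le_of_finrank_eq ?_ ?_
  · rw [mulVecLin_mul]
    exact LinearMap.range_comp_le_range _ _
  · change (Bᵀ * B).rank = Bᵀ.rank
    rw [rank_transpose_mul_self, rank_transpose]

end Matrix

theorem stmt_2_general (n : ℕ) (A₁ A₂ X : Matrix (Fin n) (Fin n) ℝ)
    (hX : X.PosSemidef)
    (hne : ((A₁ * X).trace, (A₂ * X).trace) ≠ (0, 0)) :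
    ∃ x : Fin n → ℝ, x ≠ 0 ∧ (∃ y, X.mulVec y = x) ∧
      x ⬝ᵥ A₁.mulVec x = (A₁ * X).trace ∧
      x ⬝ᵥ A₂.mulVec x = (A₂ * X).trace := by
  obtain ⟨B, rfl⟩ := hX.exists_eq_transpose_mul_self
  have hrows : ∀ i ∈ Finset.univ, B.row i ∈ LinearMap.range (Bᵀ * B).mulVecLin := by
    intro i _
    rw [range_mulVecLin_transpose_mul_self, range_mulVecLin, col_transpose]
    exact Submodule.subset_span ⟨i, rfl⟩
  obtain ⟨x, ⟨y, hy⟩, hx₁, hx₂⟩ := QuadraticMap.exists_mem_map_eq_sum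
    A₁.toQuadraticForm' A₂.toQuadraticForm' _ Finset.univ B.row hrows
  simp only [toQuadraticForm'_apply, ← trace_mul_transpose_mul_self] at hx₁ hx₂
  refine ⟨x, ?_, ⟨y, hy⟩, hx₁, hx₂⟩
  rintro rfl
  exact hne (by simp [← hx₁, ← hx₂])

theorem stmt_2 (n : ℕ) (A₁ A₂ X : Matrix (Fin n) (Fin n) ℝ)
    (hA₁ : A₁.IsSymm) (hA₂ : A₂.IsSymm)
    (hX : X.PosSemidef) (hX0 : X ≠ 0)
    (hne : ((A₁ * X).trace, (A₂ * X).trace) ≠ (0, 0)) :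
    ∃ x : Fin n → ℝ, x ≠ 0 ∧ (∃ y, X.mulVec y = x) ∧
      x ⬝ᵥ A₁.mulVec x = (A₁ * X).trace ∧
      x ⬝ᵥ A₂.mulVec x = (A₂ * X).trace :=
  stmt_2_general n A₁ A₂ X hX hne
end

section
/- Let A_1, A_2 be real symmetric n×n matrices, X a nonzero positive semidefinite real symmetric n×n matrix with tr(A_1 X) = tr(A_2 X) = 0, and V ⊆ ℝ^n a linear subspace containing Range(X) with dim(V) ≥ 3. Then there exists a nonzero vector x ∈ V with x^T A_1 x = 0 and x^T A_2 x = 0. -/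
/-!
Write `X = ∑ⱼ cⱼ cⱼᵀ` with `cⱼ = √μⱼ bⱼ = X ((√μⱼ)⁻¹ bⱼ) ∈ V` (spectral theorem). For the
`ℂ`-valued quadratic form `q x = xᵀA₁x + i xᵀA₂x` on `V` this gives `∑ⱼ q cⱼ = 0`, so `0` lies in
the convex hull of `q (V ∖ 0)`; by Carathéodory in `ℂ ≅ ℝ²` it is `q x + q y + q z` with `z ≠ 0`.
Normalizing `q z = 1` and rotating the pair `(x, y)` makes `q x` and `q y` real, one of them
negative, which leaves two vectors with `q x + q y = 0`. On `span {x, y}` the form is then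
`L ((s + t i) ^ 2)` for a real-linear `L : ℂ → ℂ`. If `L` is singular, `q` vanishes on a nonzero
vector of the span. Otherwise we may assume `L = id`, and for `w ∈ V ∖ span {x, y}` the value
`q (w + s x + t y)` is `z ^ 2 + p z + Q z̄ + c` with `z = s + t i`; this equation always has a
solution, by an intermediate value argument on a quartic.
-/

open Complex ComplexConjugate Module Submodule Matrix

namespace Complex

theorem exists_sq_add_conj_add_eq_zero (a : ℂ) : ∃ ξ : ℂ, ξ ^ 2 + conj ξ + a = 0 := by
  suffices ∃ x y : ℝ, x ^ 2 - y ^ 2 + x + a.re = 0 ∧ 2 * x * y - y + a.im = 0 by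
    obtain ⟨x, y, hre, him⟩ := this
    refine ⟨⟨x, y⟩, Complex.ext ?_ ?_⟩ <;> simp [sq] <;> linarith
  rcases eq_or_ne a.im 0 with ha | ha
  · rcases le_or_gt a.re (1 / 4) with hre | hre
    · have hs := Real.sq_sqrt (show 0 ≤ 1 - 4 * a.re by linarith)
      exact ⟨(-1 + √(1 - 4 * a.re)) / 2, 0, by nlinarith, by simp [ha]⟩
    · have hs := Real.sq_sqrt (show 0 ≤ 3 / 4 + a.re by linarith)
      exact ⟨1 / 2, √(3 / 4 + a.re), by nlinarith, by rw [ha]; ring⟩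
  -- eliminating `y = a.im / (1 - 2 x)` leaves a quartic in `x`, negative at `x = 1/2`
  set g : ℝ → ℝ := fun x => (x ^ 2 + x + a.re) * (1 - 2 * x) ^ 2 - a.im ^ 2
  set M := 1 + |a.re| + |a.im|
  have hgM : 0 ≤ g M := by
    have h1 : 1 ≤ M ^ 2 + M + a.re := by
      nlinarith [abs_nonneg a.re, abs_nonneg a.im, neg_abs_le a.re]
    have h2 : a.im ^ 2 ≤ (1 - 2 * M) ^ 2 := by
      nlinarith [abs_nonneg a.re, abs_nonneg a.im, sq_abs a.im]
    nlinarith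
  obtain ⟨x, -, hx⟩ : ∃ x ∈ Set.Icc (1 / 2) M, g x = 0 :=
    intermediate_value_Icc (by linarith [abs_nonneg a.re, abs_nonneg a.im]) (by fun_prop)
      ⟨by simp [g]; positivity, hgM⟩
  have hx2 : 1 - 2 * x ≠ 0 := by
    rintro h
    simp [g, show x = 1 / 2 by linarith, ha] at hx
  obtain ⟨y, hy⟩ : ∃ y, y * (1 - 2 * x) = a.im := ⟨a.im / (1 - 2 * x), div_mul_cancel₀ _ hx2⟩
  refine ⟨x, y, mul_right_cancel₀ (pow_ne_zero 2 hx2) ?_, by linear_combination -hy⟩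
  linear_combination hx - (y * (1 - 2 * x) + a.im) * hy

theorem exists_sq_add_mul_conj_add_eq_zero (Q c : ℂ) : ∃ z : ℂ, z ^ 2 + Q * conj z + c = 0 := by
  rcases eq_or_ne Q 0 with rfl | hQ
  · obtain ⟨z, hz⟩ := IsAlgClosed.exists_pow_nat_eq (-c) two_pos
    exact ⟨z, by rw [hz]; ring⟩
  -- substituting `z = ω |ω|² ξ` with `ω ^ 3 = Q` turns the equation into `ξ ^ 2 + conj ξ + a = 0`
  obtain ⟨ω, rfl⟩ := IsAlgClosed.exists_pow_nat_eq Q three_pos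
  have hω : ω ≠ 0 := by rintro rfl; simp at hQ
  set r := ω * conj ω
  have hr0 : r ≠ 0 := mul_ne_zero hω ((map_ne_zero _).2 hω)
  have hrc : conj r = r := by simp [r, mul_comm]
  obtain ⟨ξ, hξ⟩ := exists_sq_add_conj_add_eq_zero (c / (ω ^ 2 * r ^ 2))
  refine ⟨ω * r * ξ, ?_⟩
  rw [map_mul, map_mul, hrc]
  field_simp at hξ
  linear_combination hξ

theorem exists_sq_add_mul_add_mul_conj_add_eq_zero (p Q c : ℂ) :
    ∃ z : ℂ, z ^ 2 + p * z + Q * conj z + c = 0 := by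
  obtain ⟨ζ, hζ⟩ := exists_sq_add_mul_conj_add_eq_zero Q (c - p ^ 2 / 4 - Q * conj p / 2)
  refine ⟨ζ - p / 2, ?_⟩
  rw [map_sub, map_div₀, map_ofNat]
  linear_combination hζ

end Complex

theorem exists_notMem_span_pair {K E : Type*} [DivisionRing K] [AddCommGroup E] [Module K E]
    (hE : 3 ≤ finrank K E) (x y : E) : ∃ w, w ∉ span K {x, y} := by
  classical
  by_contra! h
  have hle := finrank_span_le_card (R := K) ({x, y} : Set E)
  rw [show span K {x, y} = ⊤ from eq_top_iff.2 fun w _ => h w, finrank_top] at hle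
  have := Finset.card_le_two (a := x) (b := y)
  simp only [Set.toFinset_insert, Set.toFinset_singleton] at hle
  omega

namespace QuadraticMap

section CommRing

variable {R M N : Type*} [CommRing R] [AddCommGroup M] [AddCommGroup N] [Module R M] [Module R N]
  (Q : QuadraticMap R M N)

theorem map_smul_add_smul (s t : R) (x y : M) :
    Q (s • x + t • y) = (s * s) • Q x + (t * t) • Q y + (s * t) • polar Q x y := by
  rw [QuadraticMap.map_add Q, Q.map_smul, Q.map_smul, polar_smul_left, polar_smul_right, smul_smul]

theorem map_smul_add_smul_add_map_neg_smul_add_smul (s t : R) (x y : M) :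
    Q (s • x + t • y) + Q (-t • x + s • y) = (s * s + t * t) • (Q x + Q y) := by
  rw [map_smul_add_smul, map_smul_add_smul]
  module

end CommRing

section Real

variable {E N : Type*} [AddCommGroup E] [Module ℝ E] [AddCommGroup N] [Module ℝ N]

theorem map_eq_zero_of_smul_add_smul_eq_zero (Q : QuadraticMap ℝ E N) {x y : E}
    (h : Q x + Q y = 0) {a b : ℝ} (hab : a ≠ 0 ∨ b ≠ 0) (hdep : a • x + b • y = 0) :
    Q x = 0 ∧ Q y = 0 := by
  have hy : Q y = -Q x := eq_neg_of_add_eq_zero_right h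
  have hx : (a * a + b * b) • Q x = 0 := by
    have := congrArg Q (eq_neg_of_add_eq_zero_left hdep)
    rw [QuadraticMap.map_neg, Q.map_smul, Q.map_smul, hy] at this
    rw [add_smul, this, smul_neg, neg_add_cancel]
  have hab' : 0 < a * a + b * b := by
    rcases hab with h | h <;> nlinarith [mul_self_pos.2 h, mul_self_nonneg a, mul_self_nonneg b]
  have hx0 := (smul_eq_zero.1 hx).resolve_left hab'.ne'
  exact ⟨hx0, by rw [hy, hx0, neg_zero]⟩

theorem exists_isotropic_rotation (r : QuadraticMap ℝ E ℝ) {x y : E} (h : r x + r y = 0) :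
    ∃ s t : ℝ, (s ≠ 0 ∨ t ≠ 0) ∧ r (s • x + t • y) = 0 ∧ r (-t • x + s • y) = 0 := by
  suffices ∃ s t : ℝ, (s ≠ 0 ∨ t ≠ 0) ∧ r (s • x + t • y) = 0 by
    obtain ⟨s, t, hst, h0⟩ := this
    refine ⟨s, t, hst, h0, ?_⟩
    have := r.map_smul_add_smul_add_map_neg_smul_add_smul s t x y
    rwa [h, h0, smul_zero, zero_add] at this
  simp_rw [map_smul_add_smul, smul_eq_mul, eq_neg_of_add_eq_zero_right h]
  rcases eq_or_ne (r x) 0 with hx | hx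
  · exact ⟨1, 0, by simp, by simp [hx]⟩
  set d := polar r x y / 2
  have hs := Real.sq_sqrt (add_nonneg (sq_nonneg d) (sq_nonneg (r x)))
  refine ⟨-d + √(d ^ 2 + r x ^ 2), r x, Or.inr hx, ?_⟩
  linear_combination r x * hs

end Real

section Complex

variable {E : Type*} [AddCommGroup E] [Module ℝ E] (q : QuadraticMap ℝ E ℂ)

theorem not_anisotropic_of_map_smul_add_smul_eq_sq (hE : 3 ≤ finrank ℝ E) {x y : E}
    (hq : ∀ s t : ℝ, q (s • x + t • y) = (s + t * I) ^ 2) : ¬ q.Anisotropic := by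
  obtain ⟨w, hw⟩ := exists_notMem_span_pair hE x y
  set γ₀ := polar q w x
  set γ₁ := polar q w y
  -- `q (w + s x + t y) = z ^ 2 + p z + Q (conj z) + q w` for `z = s + t i` and these `p`, `Q`
  obtain ⟨z, hz⟩ := Complex.exists_sq_add_mul_add_mul_conj_add_eq_zero
    ((γ₀ - γ₁ * I) / 2) ((γ₀ + γ₁ * I) / 2) (q w)
  refine (not_anisotropic_iff_exists q).2 ⟨w + (z.re • x + z.im • y), fun h0 => hw ?_, ?_⟩
  · rw [eq_neg_of_add_eq_zero_left h0]
    exact neg_mem (add_mem (smul_mem _ _ (subset_span (by simp)))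
      (smul_mem _ _ (subset_span (by simp))))
  · rw [QuadraticMap.map_add q, hq, polar_add_right, polar_smul_right, polar_smul_right]
    rw [← re_add_im z] at hz
    simp only [map_add, map_mul, conj_ofReal, conj_I, real_smul] at hz ⊢
    linear_combination hz + z.im * γ₁ * I_sq

theorem not_anisotropic_of_add_eq_zero (hE : 3 ≤ finrank ℝ E) {x y : E} (hxy : x ≠ 0 ∨ y ≠ 0)
    (h : q x + q y = 0) : ¬ q.Anisotropic := by
  set L : ℂ →ₗ[ℝ] ℂ := reLm.smulRight (q x) + imLm.smulRight (polar q x y / 2)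
  have hspan (s t : ℝ) : q (s • x + t • y) = L ((s + t * I) ^ 2) := by
    have hre : (((s : ℂ) + t * I) ^ 2).re = s * s - t * t := by simp [pow_two]
    have him : (((s : ℂ) + t * I) ^ 2).im = 2 * s * t := by simp [pow_two]; ring
    rw [map_smul_add_smul, eq_neg_of_add_eq_zero_right h]
    simp only [L, LinearMap.add_apply, LinearMap.smulRight_apply, reLm_coe, imLm_coe, hre, him,
      real_smul]
    push_cast
    ring
  by_cases hL : Function.Injective L
  · set e := LinearEquiv.ofInjectiveEndo L hL
    have := not_anisotropic_of_map_smul_add_smul_eq_sq (e.symm.toLinearMap.compQuadraticMap q) hE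
      (x := x) (y := y) fun s t => by
        rw [LinearMap.compQuadraticMap_apply, hspan, LinearEquiv.coe_coe]
        exact e.symm_apply_apply _
    exact fun hq => this fun v hv => hq v ((map_eq_zero_iff _ e.symm.injective).1 hv)
  · obtain ⟨η, hη, hη0⟩ : ∃ η, L η = 0 ∧ η ≠ 0 := by
      simpa [injective_iff_map_eq_zero] using hL
    obtain ⟨ζ, rfl⟩ := IsAlgClosed.exists_pow_nat_eq η two_pos
    have hq0 : q (ζ.re • x + ζ.im • y) = 0 := by rw [hspan, re_add_im, hη]
    by_cases hv : ζ.re • x + ζ.im • y = 0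
    · have hζ : ζ.re ≠ 0 ∨ ζ.im ≠ 0 := by
        contrapose! hη0
        rw [← re_add_im ζ, hη0.1, hη0.2]
        simp
      obtain ⟨hx0, hy0⟩ := map_eq_zero_of_smul_add_smul_eq_zero q h hζ hv
      rw [not_anisotropic_iff_exists]
      rcases hxy with hx | hy
      exacts [⟨x, hx, hx0⟩, ⟨y, hy, hy0⟩]
    · exact (not_anisotropic_iff_exists q).2 ⟨_, hv, hq0⟩

theorem exists_add_eq_zero_of_add_add_eq_zero {x y z : E} (hz : q z ≠ 0)
    (h : q x + q y + q z = 0) : ∃ a b : E, b ≠ 0 ∧ q a + q b = 0 := by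
  set q' := (q z)⁻¹ • q
  have hq' (v : E) : q' v = (q z)⁻¹ * q v := rfl
  have hxy : q' x + q' y = -1 := by
    rw [hq', hq', ← mul_add, eq_neg_of_add_eq_zero_left h, mul_neg, inv_mul_cancel₀ hz]
  suffices key : ∀ v, (q' v).im = 0 → (q' v).re < 0 → ∃ a b : E, b ≠ 0 ∧ q a + q b = 0 by
    -- after normalizing `q z = 1`, a rotation of `(x, y)` makes both values of `q'` real
    obtain ⟨s, t, hst, h₀, h₁⟩ := exists_isotropic_rotation (imLm.compQuadraticMap q')
      (x := x) (y := y) (by simpa using congrArg Complex.im hxy)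
    have hsum := congrArg Complex.re (q'.map_smul_add_smul_add_map_neg_smul_add_smul s t x y)
    rw [hxy] at hsum
    simp only [add_re, smul_re, neg_re, one_re, smul_eq_mul] at hsum
    have hpos : 0 < s * s + t * t := by
      rcases hst with h | h <;> nlinarith [mul_self_pos.2 h, mul_self_nonneg s, mul_self_nonneg t]
    simp only [LinearMap.compQuadraticMap_apply, imLm_coe] at h₀ h₁
    rcases lt_or_ge (q' (s • x + t • y)).re 0 with h | h
    · exact key _ h₀ h
    · exact key _ h₁ (by nlinarith)
  intro v him hre
  have hz0 : z ≠ 0 := fun h => hz (h ▸ q.map_zero)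
  refine ⟨v, √(-(q' v).re) • z, smul_ne_zero (Real.sqrt_ne_zero'.2 (by linarith)) hz0, ?_⟩
  have hv : q' v = (q' v).re := Complex.ext (by simp) (by simp [him])
  have : q' v + q' (√(-(q' v).re) • z) = 0 := by
    rw [q'.map_smul, Real.mul_self_sqrt (by linarith), hq' z, inv_mul_cancel₀ hz, hv]
    simp
  rw [hq', hq', ← mul_add] at this
  exact (mul_eq_zero.1 this).resolve_left (inv_ne_zero hz)

theorem exists_add_add_eq_zero_of_zero_mem_convexHull
    (h : (0 : ℂ) ∈ convexHull ℝ (q '' {v | v ≠ 0})) :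
    ∃ x y z : E, z ≠ 0 ∧ q x + q y + q z = 0 := by
  classical
  obtain ⟨ι, _, p, w, hp, hai, hw0, hw1, hwp⟩ := eq_pos_convex_span_of_mem_convexHull h
  have hcard : Fintype.card ι ≤ 3 := by
    have := (vectorSpan ℝ (Set.range p)).finrank_le
    rw [finrank_real_complex] at this
    linarith [hai.card_le_finrank_succ]
  choose u hu0 hup using fun i => hp (Set.mem_range_self i)
  set y := fun i => √(w i) • u i
  have hy0 (i : ι) : y i ≠ 0 := smul_ne_zero (Real.sqrt_ne_zero'.2 (hw0 i)) (hu0 i)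
  have hsum : ∑ i, q (y i) = 0 := by
    rw [← hwp]
    refine Finset.sum_congr rfl fun i _ => ?_
    rw [q.map_smul, Real.mul_self_sqrt (hw0 i).le, hup]
  obtain ⟨i₀⟩ : Nonempty ι := by
    by_contra h
    simp [not_nonempty_iff.1 h] at hw1
  obtain ⟨a, b, hab⟩ : ∃ a b, q a + q b = ∑ i ∈ Finset.univ.erase i₀, q (y i) := by
    have : (Finset.univ.erase i₀).card ≤ 2 := by
      rw [Finset.card_erase_of_mem (Finset.mem_univ _), Finset.card_univ]; omega
    interval_cases hc : (Finset.univ.erase i₀).card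
    · exact ⟨0, 0, by simp [Finset.card_eq_zero.1 hc]⟩
    · obtain ⟨i, hi⟩ := Finset.card_eq_one.1 hc
      exact ⟨y i, 0, by simp [hi]⟩
    · obtain ⟨i, j, hij, hs⟩ := Finset.card_eq_two.1 hc
      exact ⟨y i, y j, by simp [hs, Finset.sum_pair hij]⟩
  exact ⟨a, b, y i₀, hy0 i₀, by rw [hab, Finset.sum_erase_add _ _ (Finset.mem_univ _), hsum]⟩

theorem not_anisotropic_of_zero_mem_convexHull (hE : 3 ≤ finrank ℝ E)
    (h : (0 : ℂ) ∈ convexHull ℝ (q '' {v | v ≠ 0})) : ¬ q.Anisotropic := by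
  obtain ⟨x, y, z, hz, hsum⟩ := exists_add_add_eq_zero_of_zero_mem_convexHull q h
  by_cases hqz : q z = 0
  · exact (not_anisotropic_iff_exists q).2 ⟨z, hz, hqz⟩
  obtain ⟨a, b, hb, hab⟩ := exists_add_eq_zero_of_add_add_eq_zero q hqz hsum
  exact not_anisotropic_of_add_eq_zero q hE (Or.inr hb) hab

end Complex

end QuadraticMap

theorem zero_mem_convexHull_image_of_sum_eq_zero {E F ι : Type*} [Zero E] [AddCommGroup F]
    [Module ℝ F] [Fintype ι] {f : E → F} (hf : f 0 = 0) {u : ι → E} (hu : ∃ i, u i ≠ 0)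
    (h : ∑ i, f (u i) = 0) : (0 : F) ∈ convexHull ℝ (f '' {v | v ≠ 0}) := by
  classical
  set t := Finset.univ.filter fun i => u i ≠ 0
  obtain ⟨i, hi⟩ := hu
  have hi : i ∈ t := by simp [t, hi]
  have hc := t.centerMass_mem_convexHull (s := f '' {v | v ≠ 0}) (w := fun _ => (1 : ℝ))
    (z := fun i => f (u i)) (fun _ _ => zero_le_one)
    (by rw [Finset.sum_const, nsmul_one]; exact_mod_cast Finset.card_pos.2 ⟨i, hi⟩)
    (fun j hj => ⟨u j, by simpa [t] using hj, rfl⟩)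
  have ht : ∑ j ∈ t, f (u j) = 0 := by
    rw [← h]
    exact Finset.sum_filter_of_ne fun j _ hj h0 => hj (by rw [h0, hf])
  simpa [Finset.centerMass, ht] using hc

namespace Matrix

variable {n : Type*} [Fintype n] [DecidableEq n]

noncomputable def toComplexQuadraticMap (A₁ A₂ : Matrix n n ℝ) : QuadraticMap ℝ (n → ℝ) ℂ :=
  (LinearMap.toSpanSingleton ℝ ℂ 1).compQuadraticMap A₁.toQuadraticForm' +
    (LinearMap.toSpanSingleton ℝ ℂ I).compQuadraticMap A₂.toQuadraticForm'

theorem toComplexQuadraticMap_apply (A₁ A₂ : Matrix n n ℝ) (x : n → ℝ) :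
    toComplexQuadraticMap A₁ A₂ x = ⟨x ⬝ᵥ A₁ *ᵥ x, x ⬝ᵥ A₂ *ᵥ x⟩ := by
  apply Complex.ext <;> simp [toComplexQuadraticMap, toQuadraticForm', toLinearMap₂'_apply']

theorem IsHermitian.trace_mul_eq_sum_eigenvalues_mul {𝕜 : Type*} [RCLike 𝕜] {X : Matrix n n 𝕜}
    (hX : X.IsHermitian) (A : Matrix n n 𝕜) :
    (A * X).trace = ∑ j, hX.eigenvalues j *
      (star ⇑(hX.eigenvectorBasis j) ⬝ᵥ A *ᵥ hX.eigenvectorBasis j) := by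
  rw [← mul_one (A * X), ← Unitary.coe_mul_star_self hX.eigenvectorUnitary, ← Matrix.mul_assoc,
    trace_mul_cycle, trace]
  refine Finset.sum_congr rfl fun j _ => ?_
  rw [diag_apply, mul_mul_apply, ← mulVec_mulVec, hX.eigenvectorUnitary_transpose_apply,
    hX.mulVec_eigenvectorBasis, mulVec_smul, dotProduct_smul, RCLike.real_smul_eq_coe_mul]
  congr 2

theorem PosSemidef.exists_trace_mul_eq_sum {X : Matrix n n ℝ} (hX : X.PosSemidef) (hX0 : X ≠ 0) :
    ∃ c : n → n → ℝ, (∀ j, ∃ y, X *ᵥ y = c j) ∧ (∃ j, c j ≠ 0) ∧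
      ∀ A : Matrix n n ℝ, (A * X).trace = ∑ j, c j ⬝ᵥ A *ᵥ c j := by
  set μ := hX.1.eigenvalues
  set b := hX.1.eigenvectorBasis
  refine ⟨fun j => √(μ j) • ⇑(b j), fun j => ⟨(√(μ j))⁻¹ • ⇑(b j), ?_⟩, ?_, fun A => ?_⟩
  · rw [mulVec_smul, hX.1.mulVec_eigenvectorBasis, smul_smul, ← div_eq_inv_mul, Real.div_sqrt]
  · obtain ⟨j, hj⟩ := Function.ne_iff.1 (mt hX.1.eigenvalues_eq_zero_iff.1 hX0)
    exact ⟨j, smul_ne_zero (Real.sqrt_ne_zero'.2 ((hX.eigenvalues_nonneg j).lt_of_ne' hj))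
      ((WithLp.ofLp_eq_zero 2).ne.2 (b.orthonormal.ne_zero j))⟩
  · rw [hX.1.trace_mul_eq_sum_eigenvalues_mul]
    refine Finset.sum_congr rfl fun j _ => ?_
    rw [star_trivial, smul_dotProduct, mulVec_smul, dotProduct_smul, smul_smul,
      Real.mul_self_sqrt (hX.eigenvalues_nonneg j), smul_eq_mul]
    rfl

end Matrix

theorem stmt_3_general (n : ℕ) (A₁ A₂ X : Matrix (Fin n) (Fin n) ℝ)
    (hX : X.PosSemidef) (hX0 : X ≠ 0)
    (h1 : (A₁ * X).trace = 0) (h2 : (A₂ * X).trace = 0)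
    (V : Submodule ℝ (Fin n → ℝ))
    (hrange : ∀ y : Fin n → ℝ, X.mulVec y ∈ V)
    (hdim : 3 ≤ Module.finrank ℝ V) :
    ∃ x : Fin n → ℝ, x ≠ 0 ∧ x ∈ V ∧
      x ⬝ᵥ A₁.mulVec x = 0 ∧ x ⬝ᵥ A₂.mulVec x = 0 := by
  obtain ⟨c, hcX, hc0, htrace⟩ := hX.exists_trace_mul_eq_sum hX0
  have hcV (j : Fin n) : c j ∈ V := by
    obtain ⟨y, hy⟩ := hcX j
    exact hy ▸ hrange y
  set q := (toComplexQuadraticMap A₁ A₂).comp V.subtype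
  have hsum : ∑ j, q ⟨c j, hcV j⟩ = 0 := by
    apply Complex.ext <;> simp [q, toComplexQuadraticMap_apply, ← htrace, h1, h2]
  obtain ⟨v, hv0, hqv⟩ := (QuadraticMap.not_anisotropic_iff_exists q).1 <|
    q.not_anisotropic_of_zero_mem_convexHull hdim <|
      zero_mem_convexHull_image_of_sum_eq_zero q.map_zero
        (by simpa [Subtype.ext_iff] using hc0) hsum
  simp only [q, QuadraticMap.comp_apply, toComplexQuadraticMap_apply, Complex.ext_iff] at hqv
  exact ⟨v, by simpa using hv0, v.2, hqv.1, hqv.2⟩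

theorem stmt_3 (n : ℕ) (A₁ A₂ X : Matrix (Fin n) (Fin n) ℝ)
    (hA₁ : A₁.IsSymm) (hA₂ : A₂.IsSymm)
    (hX : X.PosSemidef) (hX0 : X ≠ 0)
    (h1 : (A₁ * X).trace = 0) (h2 : (A₂ * X).trace = 0)
    (V : Submodule ℝ (Fin n → ℝ))
    (hrange : ∀ y : Fin n → ℝ, X.mulVec y ∈ V)
    (hdim : 3 ≤ Module.finrank ℝ V) :
    ∃ x : Fin n → ℝ, x ≠ 0 ∧ x ∈ V ∧
      x ⬝ᵥ A₁.mulVec x = 0 ∧ x ⬝ᵥ A₂.mulVec x = 0 :=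
  stmt_3_general n A₁ A₂ X hX hX0 h1 h2 V hrange hdim
end

section
/- Consider minimizing x^T A_0 x over x ∈ ℝ^n subject to x^T A_i x ⊴_i c_i for i = 1,...,m (each ⊴_i being ≤ or =), where A_0,...,A_m are real symmetric and c ∈ ℝ^m. Suppose there exist real numbers μ̃_1,...,μ̃_m with μ̃_i > 0 whenever ⊴_i is ≤, such that Z̃ := A_0 + Σ_{i=1}^m μ̃_i A_i is positive definite. If x_0 is feasible, then the level set {x feasible : x^T A_0 x ≤ x_0^T A_0 x_0} is closed and bounded. -/
/-!
Feasibility bounds each `μ̃ᵢ xᵀAᵢx` by `μ̃ᵢ cᵢ` (equalities exactly, inequalities because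
`μ̃ᵢ > 0`), so on the level set `xᵀZ̃x ≤ x₀ᵀA₀x₀ + Σ μ̃ᵢ cᵢ`. A positive definite form dominates
`ε‖x‖²` for the minimum `ε > 0` of the form on the unit sphere, which gives boundedness.
Closedness holds because all constraints are (in)equalities between continuous functions.
-/

open Matrix

theorem isClosed_setOf_ite_le_eq {X : Type*} [TopologicalSpace X] (b : Bool) {f : X → ℝ}
    (hf : Continuous f) (a : ℝ) : IsClosed {x | if b then f x ≤ a else f x = a} := by
  cases b
  · simpa using isClosed_eq hf continuous_const
  · simpa using isClosed_le hf continuous_const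

theorem sum_mul_le_sum_mul_of_ite_le_eq {κ : Type*} [Fintype κ] (isIneq : κ → Bool)
    {μ q c : κ → ℝ} (hμ : ∀ i, isIneq i = true → 0 ≤ μ i)
    (hq : ∀ i, if isIneq i then q i ≤ c i else q i = c i) :
    ∑ i, μ i * q i ≤ ∑ i, μ i * c i := by
  refine Finset.sum_le_sum fun i _ => ?_
  have hqi := hq i
  cases h : isIneq i
  · simp only [h, Bool.false_eq_true, if_false] at hqi
    rw [hqi]
  · simp only [h, if_true] at hqi
    exact mul_le_mul_of_nonneg_left hqi (hμ i h)

namespace Matrix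

variable {ι : Type*} [Fintype ι]

theorem dotProduct_sum_smul_mulVec {R κ : Type*} [CommSemiring R] [Fintype κ]
    (A : κ → Matrix ι ι R) (μ : κ → R) (x : ι → R) :
    x ⬝ᵥ (∑ i, μ i • A i) *ᵥ x = ∑ i, μ i * (x ⬝ᵥ A i *ᵥ x) := by
  simp [sum_mulVec, dotProduct_sum, smul_mulVec, dotProduct_smul]

theorem continuous_dotProduct_mulVec_self (Z : Matrix ι ι ℝ) :
    Continuous fun x : ι → ℝ => x ⬝ᵥ Z *ᵥ x := by
  simp only [dotProduct, mulVec]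
  fun_prop

theorem smul_dotProduct_mulVec_smul {R : Type*} [CommSemiring R] (Z : Matrix ι ι R) (t : R)
    (x : ι → R) : (t • x) ⬝ᵥ Z *ᵥ (t • x) = t ^ 2 * (x ⬝ᵥ Z *ᵥ x) := by
  simp only [mulVec_smul, dotProduct_smul, smul_dotProduct, smul_eq_mul]
  ring

theorem PosDef.exists_pos_mul_sq_norm_le {Z : Matrix ι ι ℝ} (hZ : Z.PosDef) :
    ∃ ε > 0, ∀ x : ι → ℝ, ε * ‖x‖ ^ 2 ≤ x ⬝ᵥ Z *ᵥ x := by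
  rcases subsingleton_or_nontrivial (ι → ℝ) with _ | _
  · exact ⟨1, one_pos, fun x => by simp [Subsingleton.elim x 0]⟩
  obtain ⟨u, hu, hmin⟩ := (isCompact_sphere (0 : ι → ℝ) 1).exists_isMinOn
    (NormedSpace.sphere_nonempty.2 zero_le_one) (continuous_dotProduct_mulVec_self Z).continuousOn
  refine ⟨u ⬝ᵥ Z *ᵥ u, hZ.dotProduct_mulVec_pos (ne_zero_of_mem_unit_sphere ⟨u, hu⟩),
    fun x => ?_⟩
  rcases eq_or_ne x 0 with rfl | hx
  · simp
  have hxpos : 0 < ‖x‖ := norm_pos_iff.2 hx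
  have hmin_x : u ⬝ᵥ Z *ᵥ u ≤ (‖x‖ ^ 2)⁻¹ * (x ⬝ᵥ Z *ᵥ x) := by
    have := isMinOn_iff.1 hmin (‖x‖⁻¹ • x) (by simp [norm_smul, hxpos.ne'])
    rwa [smul_dotProduct_mulVec_smul, inv_pow] at this
  calc u ⬝ᵥ Z *ᵥ u * ‖x‖ ^ 2 ≤ (‖x‖ ^ 2)⁻¹ * (x ⬝ᵥ Z *ᵥ x) * ‖x‖ ^ 2 := by gcongr
    _ = x ⬝ᵥ Z *ᵥ x := by field_simp

theorem PosDef.isBounded_setOf_dotProduct_mulVec_le {Z : Matrix ι ι ℝ} (hZ : Z.PosDef) (C : ℝ) :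
    Bornology.IsBounded {x : ι → ℝ | x ⬝ᵥ Z *ᵥ x ≤ C} := by
  obtain ⟨ε, hε, hlow⟩ := hZ.exists_pos_mul_sq_norm_le
  refine isBounded_iff_forall_norm_le.2 ⟨√(C / ε), fun x hx => Real.le_sqrt_of_sq_le ?_⟩
  rw [le_div_iff₀ hε]
  linarith [hlow x, show x ⬝ᵥ Z *ᵥ x ≤ C from hx]

end Matrix

theorem stmt_4_general (n m : ℕ) (A₀ : Matrix (Fin n) (Fin n) ℝ)
    (A : Fin m → Matrix (Fin n) (Fin n) ℝ) (c : Fin m → ℝ)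
    (isIneq : Fin m → Bool)
    (μ : Fin m → ℝ) (hμ : ∀ i, isIneq i = true → 0 < μ i)
    (hZ : (A₀ + ∑ i, μ i • A i).PosDef)
    (feasible : (Fin n → ℝ) → Prop)
    (hfeas : ∀ x, feasible x ↔ ∀ i,
      if isIneq i then x ⬝ᵥ (A i).mulVec x ≤ c i else x ⬝ᵥ (A i).mulVec x = c i)
    (x₀ : Fin n → ℝ) :
    IsClosed {x | feasible x ∧ x ⬝ᵥ A₀.mulVec x ≤ x₀ ⬝ᵥ A₀.mulVec x₀} ∧
    Bornology.IsBounded {x | feasible x ∧ x ⬝ᵥ A₀.mulVec x ≤ x₀ ⬝ᵥ A₀.mulVec x₀} := by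
  constructor
  · rw [Set.ofPred_and]
    refine IsClosed.inter ?_ (isClosed_le (continuous_dotProduct_mulVec_self A₀) continuous_const)
    simp_rw [hfeas, Set.ofPred_forall]
    exact isClosed_iInter fun i =>
      isClosed_setOf_ite_le_eq _ (continuous_dotProduct_mulVec_self (A i)) (c i)
  · refine (hZ.isBounded_setOf_dotProduct_mulVec_le
      (x₀ ⬝ᵥ A₀ *ᵥ x₀ + ∑ i, μ i * c i)).subset ?_
    rintro x ⟨hx_feas, hx_level⟩
    rw [Set.mem_ofPred_eq, add_mulVec, dotProduct_add, dotProduct_sum_smul_mulVec]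
    exact add_le_add hx_level <| sum_mul_le_sum_mul_of_ite_le_eq isIneq
      (fun i h => (hμ i h).le) ((hfeas x).1 hx_feas)

theorem stmt_4 (n m : ℕ) (A₀ : Matrix (Fin n) (Fin n) ℝ)
    (A : Fin m → Matrix (Fin n) (Fin n) ℝ) (c : Fin m → ℝ)
    (hA₀ : A₀.IsSymm) (hA : ∀ i, (A i).IsSymm)
    (isIneq : Fin m → Bool)
    (μ : Fin m → ℝ) (hμ : ∀ i, isIneq i = true → 0 < μ i)
    (hZ : (A₀ + ∑ i, μ i • A i).PosDef)
    (feasible : (Fin n → ℝ) → Prop)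
    (hfeas : ∀ x, feasible x ↔ ∀ i,
      if isIneq i then x ⬝ᵥ (A i).mulVec x ≤ c i else x ⬝ᵥ (A i).mulVec x = c i)
    (x₀ : Fin n → ℝ) (hx₀ : feasible x₀) :
    IsClosed {x | feasible x ∧ x ⬝ᵥ A₀.mulVec x ≤ x₀ ⬝ᵥ A₀.mulVec x₀} ∧
    Bornology.IsBounded {x | feasible x ∧ x ⬝ᵥ A₀.mulVec x ≤ x₀ ⬝ᵥ A₀.mulVec x₀} :=
  stmt_4_general n m A₀ A c isIneq μ hμ hZ feasible hfeas x₀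
end

section
/- Let B_1, B_2 be complex Hermitian n×n matrices and x̂_1, x̂_2 ∈ ℂ^n. Assume x̂_k^H B_i x̂_k = 0 for i,k ∈ {1,2}, Re(x̂_1^H B_1 x̂_2) ≠ 0, Re(x̂_1^H B_2 x̂_2) = 0, and Im(x̂_1^H B_2 x̂_2) ≠ 0. If α, β ∈ ℂ satisfy (α x̂_1 + β x̂_2)^H B_i (α x̂_1 + β x̂_2) = 0 for i = 1,2, then conj(α)·β = 0, i.e. α = 0 or β = 0. -/
open Matrix

lemma herm_swap {n : ℕ} (A : Matrix (Fin n) (Fin n) ℂ) (hA : A.IsHermitian)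
    (x y : Fin n → ℂ) : star y ⬝ᵥ A.mulVec x = star (star x ⬝ᵥ A.mulVec y) := by
  rw [star_dotProduct, star_mulVec, hA.eq, ← dotProduct_mulVec]

lemma key (t a b : ℂ) (ha : a.re ≠ 0) (hbre : b.re = 0) (hbim : b.im ≠ 0)
    (h1 : star t * star a + t * a = 0) (h2 : star t * star b + t * b = 0) : t = 0 := by
  have r1 := congrArg Complex.re h1
  have r2 := congrArg Complex.re h2
  simp only [Complex.add_re, Complex.mul_re, Complex.star_def, Complex.conj_re,
    Complex.conj_im, Complex.zero_re, hbre, mul_zero, zero_mul] at r1 r2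
  have htim : t.im = 0 := by
    rcases mul_eq_zero.1 (by nlinarith : t.im * b.im = 0) with h | h
    · exact h
    · exact absurd h hbim
  have htre : t.re = 0 := by
    rcases mul_eq_zero.1 (by rw [htim] at r1; nlinarith : t.re * a.re = 0) with h | h
    · exact h
    · exact absurd h ha
  exact Complex.ext htre htim

theorem stmt_12 (n : ℕ) (B₁ B₂ : Matrix (Fin n) (Fin n) ℂ)
    (hB₁ : B₁.IsHermitian) (hB₂ : B₂.IsHermitian)
    (x₁ x₂ : Fin n → ℂ)
    (h11 : star x₁ ⬝ᵥ B₁.mulVec x₁ = 0) (h12 : star x₂ ⬝ᵥ B₁.mulVec x₂ = 0)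
    (h21 : star x₁ ⬝ᵥ B₂.mulVec x₁ = 0) (h22 : star x₂ ⬝ᵥ B₂.mulVec x₂ = 0)
    (hre1 : (star x₁ ⬝ᵥ B₁.mulVec x₂).re ≠ 0)
    (hre2 : (star x₁ ⬝ᵥ B₂.mulVec x₂).re = 0)
    (him2 : (star x₁ ⬝ᵥ B₂.mulVec x₂).im ≠ 0)
    (α β : ℂ)
    (hz1 : star (α • x₁ + β • x₂) ⬝ᵥ B₁.mulVec (α • x₁ + β • x₂) = 0)
    (hz2 : star (α • x₁ + β • x₂) ⬝ᵥ B₂.mulVec (α • x₁ + β • x₂) = 0) :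
    starRingEnd ℂ α * β = 0 := by
  have e1 : star x₂ ⬝ᵥ B₁.mulVec x₁ = star (star x₁ ⬝ᵥ B₁.mulVec x₂) := herm_swap B₁ hB₁ x₁ x₂
  have e2 : star x₂ ⬝ᵥ B₂.mulVec x₁ = star (star x₁ ⬝ᵥ B₂.mulVec x₂) := herm_swap B₂ hB₂ x₁ x₂
  set a := star x₁ ⬝ᵥ B₁.mulVec x₂ with ha
  set b := star x₁ ⬝ᵥ B₂.mulVec x₂ with hb
  simp only [star_add, star_smul, mulVec_add, mulVec_smul, add_dotProduct,
    dotProduct_add, smul_dotProduct, dotProduct_smul, smul_eq_mul,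
    h11, h12, h21, h22, e1, e2, mul_zero, zero_add, add_zero] at hz1 hz2
  set t := starRingEnd ℂ α * β with ht
  have h1 : star t * star a + t * a = 0 := by
    rw [ht, starRingEnd_apply, StarMul.star_mul, star_star]; rw [← ha] at hz1; linear_combination hz1
  have h2 : star t * star b + t * b = 0 := by
    rw [ht, starRingEnd_apply, StarMul.star_mul, star_star]; rw [← hb] at hz2; linear_combination hz2
  exact key t a b hre1 hre2 him2 h1 h2
end

section
/- Let A_0, A_1, A_2 be real symmetric n×n matrices. Suppose max{x^T A_0 x, x^T A_1 x, x^T A_2 x} ≥ 0 for all x ∈ ℝ^n, there is no x ∈ ℝ^n with x^T A_0 x < 0, x^T A_1 x = 0, x^T A_2 x = 0, and there exists x_1 with x_1^T A_0 x_1 < 0 and (say) x_1^T A_1 x_1 < 0, x_1^T A_2 x_1 = 0. If also there exists x_0 with x_0^T A_1 x_0 < 0 and x_0^T A_2 x_0 < 0, then for sufficiently small ε > 0, either x_1 + ε x_0 or x_1 − ε x_0 makes all three quadratic forms strictly negative. -/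
open Matrix

private lemma expand14 {n : ℕ} (A : Matrix (Fin n) (Fin n) ℝ) (x y : Fin n → ℝ) (ε : ℝ) :
    (x + ε • y) ⬝ᵥ A.mulVec (x + ε • y) =
      x ⬝ᵥ A.mulVec x + ε * (x ⬝ᵥ A.mulVec y + y ⬝ᵥ A.mulVec x) + ε ^ 2 * (y ⬝ᵥ A.mulVec y) := by
  simp [Matrix.mulVec_add, Matrix.mulVec_smul, dotProduct_add, add_dotProduct,
    smul_dotProduct, dotProduct_smul, smul_eq_mul]
  ring

private lemma key14 (q c p ε : ℝ) (hq : q < 0) (hε : 0 < ε) (hε1 : ε ≤ 1)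
    (hεB : ε < -q / (|c| + |p| + 1)) : q + ε * c + ε ^ 2 * p < 0 := by
  have hB : (0:ℝ) < |c| + |p| + 1 := by positivity
  have h1 : ε * (|c| + |p| + 1) < -q := (lt_div_iff₀ hB).mp hεB
  have h2 : ε * c ≤ ε * |c| := mul_le_mul_of_nonneg_left (le_abs_self c) hε.le
  have h3 : ε ^ 2 * p ≤ ε ^ 2 * |p| := mul_le_mul_of_nonneg_left (le_abs_self p) (sq_nonneg ε)
  have h4 : ε ^ 2 ≤ ε := by nlinarith
  have h5 : ε ^ 2 * |p| ≤ ε * |p| := mul_le_mul_of_nonneg_right h4 (abs_nonneg p)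
  nlinarith

theorem stmt_14 (n : ℕ) (A₀ A₁ A₂ : Matrix (Fin n) (Fin n) ℝ)
    (hA₀ : A₀.IsSymm) (hA₁ : A₁.IsSymm) (hA₂ : A₂.IsSymm)
    (hmax : ∀ x : Fin n → ℝ,
      0 ≤ max (x ⬝ᵥ A₀.mulVec x) (max (x ⬝ᵥ A₁.mulVec x) (x ⬝ᵥ A₂.mulVec x)))
    (hnosol : ¬ ∃ x : Fin n → ℝ,
      x ⬝ᵥ A₀.mulVec x < 0 ∧ x ⬝ᵥ A₁.mulVec x = 0 ∧ x ⬝ᵥ A₂.mulVec x = 0)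
    (x₁ : Fin n → ℝ)
    (hx₁0 : x₁ ⬝ᵥ A₀.mulVec x₁ < 0) (hx₁1 : x₁ ⬝ᵥ A₁.mulVec x₁ < 0)
    (hx₁2 : x₁ ⬝ᵥ A₂.mulVec x₁ = 0)
    (x₀ : Fin n → ℝ)
    (hx₀1 : x₀ ⬝ᵥ A₁.mulVec x₀ < 0) (hx₀2 : x₀ ⬝ᵥ A₂.mulVec x₀ < 0) :
    ∃ ε₀ > 0, ∀ ε : ℝ, 0 < ε → ε < ε₀ →
      ((x₁ + ε • x₀) ⬝ᵥ A₀.mulVec (x₁ + ε • x₀) < 0 ∧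
       (x₁ + ε • x₀) ⬝ᵥ A₁.mulVec (x₁ + ε • x₀) < 0 ∧
       (x₁ + ε • x₀) ⬝ᵥ A₂.mulVec (x₁ + ε • x₀) < 0) ∨
      ((x₁ - ε • x₀) ⬝ᵥ A₀.mulVec (x₁ - ε • x₀) < 0 ∧
       (x₁ - ε • x₀) ⬝ᵥ A₁.mulVec (x₁ - ε • x₀) < 0 ∧
       (x₁ - ε • x₀) ⬝ᵥ A₂.mulVec (x₁ - ε • x₀) < 0) := by
  set q₀ := x₁ ⬝ᵥ A₀.mulVec x₁ with hq₀
  set q₁ := x₁ ⬝ᵥ A₁.mulVec x₁ with hq₁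
  set p₀ := x₀ ⬝ᵥ A₀.mulVec x₀ with hp₀
  set p₁ := x₀ ⬝ᵥ A₁.mulVec x₀ with hp₁
  set p₂ := x₀ ⬝ᵥ A₂.mulVec x₀ with hp₂
  set c₀ := x₁ ⬝ᵥ A₀.mulVec x₀ + x₀ ⬝ᵥ A₀.mulVec x₁ with hc₀
  set c₁ := x₁ ⬝ᵥ A₁.mulVec x₀ + x₀ ⬝ᵥ A₁.mulVec x₁ with hc₁
  set c₂ := x₁ ⬝ᵥ A₂.mulVec x₀ + x₀ ⬝ᵥ A₂.mulVec x₁ with hc₂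
  refine ⟨min 1 (min (-q₀ / (|c₀| + |p₀| + 1)) (-q₁ / (|c₁| + |p₁| + 1))), ?_, ?_⟩
  · have h0 : (0:ℝ) < -q₀ / (|c₀| + |p₀| + 1) := by
      apply div_pos (by linarith) (by positivity)
    have h1 : (0:ℝ) < -q₁ / (|c₁| + |p₁| + 1) := by
      apply div_pos (by linarith) (by positivity)
    simp [lt_min_iff, h0, h1]
  · intro ε hε hεlt
    have hε1 : ε ≤ 1 := le_of_lt (lt_of_lt_of_le hεlt (min_le_left _ _))
    have hεa : ε < -q₀ / (|c₀| + |p₀| + 1) :=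
      lt_of_lt_of_le hεlt (le_trans (min_le_right _ _) (min_le_left _ _))
    have hεb : ε < -q₁ / (|c₁| + |p₁| + 1) :=
      lt_of_lt_of_le hεlt (le_trans (min_le_right _ _) (min_le_right _ _))
    rcases le_or_gt c₂ 0 with hc | hc
    · left
      refine ⟨?_, ?_, ?_⟩
      · rw [expand14]; exact key14 q₀ c₀ p₀ ε hx₁0 hε hε1 hεa
      · rw [expand14]; exact key14 q₁ c₁ p₁ ε hx₁1 hε hε1 hεb
      · rw [expand14, ← hp₂, ← hc₂, hx₁2]
        have h1 : ε * c₂ ≤ 0 := mul_nonpos_of_nonneg_of_nonpos hε.le hc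
        have h2 : ε ^ 2 * p₂ < 0 := mul_neg_of_pos_of_neg (pow_pos hε 2) hx₀2
        linarith
    · right
      have hsub : ∀ (A : Matrix (Fin n) (Fin n) ℝ),
          (x₁ - ε • x₀) ⬝ᵥ A.mulVec (x₁ - ε • x₀) =
            x₁ ⬝ᵥ A.mulVec x₁ + (-ε) * (x₁ ⬝ᵥ A.mulVec x₀ + x₀ ⬝ᵥ A.mulVec x₁)
              + (-ε) ^ 2 * (x₀ ⬝ᵥ A.mulVec x₀) := by
        intro A
        rw [show x₁ - ε • x₀ = x₁ + (-ε) • x₀ by module]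
        exact expand14 A x₁ x₀ (-ε)
      refine ⟨?_, ?_, ?_⟩
      · rw [hsub, ← hq₀, ← hp₀, ← hc₀]
        have := key14 q₀ (-c₀) p₀ ε hx₁0 hε hε1 (by rwa [abs_neg])
        nlinarith [this]
      · rw [hsub, ← hq₁, ← hp₁, ← hc₁]
        have := key14 q₁ (-c₁) p₁ ε hx₁1 hε hε1 (by rwa [abs_neg])
        nlinarith [this]
      · rw [hsub, ← hp₂, ← hc₂, hx₁2]
        have h1 : -ε * c₂ < 0 := by nlinarith [mul_pos hε hc]
        have h2 : (-ε) ^ 2 * p₂ < 0 := by nlinarith [mul_neg_of_pos_of_neg (pow_pos hε 2) hx₀2]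
        linarith
end

section
/- Suppose Property IR holds for real symmetric n×n matrices A_0, A_1, A_2: there exist μ̆_1, μ̆_2, μ̆_3 > 0 and vectors x̆_1, x̆_2 ∈ ℝ^n such that Z̆ := A_0 + μ̆_1 A_1 + μ̆_2 A_2 + μ̆_3 I ⪰ 0, span{x̆_1, x̆_2} = Null(Z̆), x̆_1^T A_1 x̆_1 = x̆_2^T A_1 x̆_2 = 0, x̆_1^T A_1 x̆_2 ≠ 0, and x̆_1^T A_2 x̆_1 < 0 < x̆_2^T A_2 x̆_2. Then there exist α, β > 0 such that X̆ := α x̆_1 x̆_1^T + β x̆_2 x̆_2^T satisfies X̆ ⪰ 0, tr(A_1 X̆) = tr(A_2 X̆) = 0, tr(X̆) = 1, and tr(A_0 X̆) = −μ̆_3 < 0. -/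
/-!
Since `x₁ᵀ A₂ x₁ < 0 < x₂ᵀ A₂ x₂`, positive weights `α, β` can be chosen so that
`X = α x₁ x₁ᵀ + β x₂ x₂ᵀ` satisfies `tr(A₂ X) = 0` and `tr X = 1`; `tr(A₁ X) = 0` holds for any
weights. As `x₁, x₂ ∈ Null(Z)`, also `tr(Z X) = 0`, and writing
`A₀ = Z - μ₁ A₁ - μ₂ A₂ - μ₃ I` gives `tr(A₀ X) = -μ₃ tr X = -μ₃`.
-/

open Matrix

section Trace

variable {ι R : Type*} [Fintype ι] [CommSemiring R]

theorem Matrix.trace_mul_vecMulVec (A : Matrix ι ι R) (x y : ι → R) :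
    (A * vecMulVec x y).trace = y ⬝ᵥ A *ᵥ x := by
  rw [mul_vecMulVec, trace_vecMulVec, dotProduct_comm]

theorem Matrix.trace_mul_smul_vecMulVec_add_smul_vecMulVec (A : Matrix ι ι R) (α β : R)
    (x y : ι → R) :
    (A * (α • vecMulVec x x + β • vecMulVec y y)).trace =
      α * (x ⬝ᵥ A *ᵥ x) + β * (y ⬝ᵥ A *ᵥ y) := by
  simp only [Matrix.mul_add, Matrix.mul_smul, trace_add, trace_smul, trace_mul_vecMulVec,
    smul_eq_mul]

end Trace

theorem exists_pos_mul_add_mul_eq_zero_and_eq_one {K : Type*} [Field K] [LinearOrder K]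
    [IsStrictOrderedRing K] {p q u v : K} (hp : p < 0) (hq : 0 < q) (hu : 0 < u) (hv : 0 < v) :
    ∃ α β : K, 0 < α ∧ 0 < β ∧ α * p + β * q = 0 ∧ α * u + β * v = 1 := by
  have hs : 0 < q * u - p * v := by nlinarith
  refine ⟨q / (q * u - p * v), -p / (q * u - p * v), by positivity,
    div_pos (neg_pos.mpr hp) hs, ?_, ?_⟩
  · field_simp
    ring
  · field_simp
    ring

theorem Matrix.posSemidef_smul_vecMulVec_add_smul_vecMulVec {ι : Type*} [Fintype ι] {α β : ℝ}
    (hα : 0 ≤ α) (hβ : 0 ≤ β) (x y : ι → ℝ) :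
    (α • vecMulVec x x + β • vecMulVec y y).PosSemidef := by
  have hvv (z : ι → ℝ) : (vecMulVec z z).PosSemidef := by
    simpa using posSemidef_vecMulVec_self_star z
  exact ((hvv x).smul hα).add ((hvv y).smul hβ)

theorem Matrix.dotProduct_self_pos_of_dotProduct_mulVec_ne_zero {ι : Type*} [Fintype ι]
    {A : Matrix ι ι ℝ} {x : ι → ℝ} (h : x ⬝ᵥ A *ᵥ x ≠ 0) : 0 < x ⬝ᵥ x := by
  have hx : x ≠ 0 := by
    rintro rfl
    simp at h
  simpa using dotProduct_star_self_pos_iff.mpr hx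

theorem stmt_17_general (n : ℕ) (A₀ A₁ A₂ : Matrix (Fin n) (Fin n) ℝ)
    (μ₁ μ₂ μ₃ : ℝ)
    (x₁ x₂ : Fin n → ℝ)
    (hnull : Submodule.span ℝ {x₁, x₂} =
      LinearMap.ker (A₀ + μ₁ • A₁ + μ₂ • A₂ + μ₃ • (1 : Matrix (Fin n) (Fin n) ℝ)).mulVecLin)
    (h11 : x₁ ⬝ᵥ A₁.mulVec x₁ = 0) (h12 : x₂ ⬝ᵥ A₁.mulVec x₂ = 0)
    (h21 : x₁ ⬝ᵥ A₂.mulVec x₁ < 0) (h22 : 0 < x₂ ⬝ᵥ A₂.mulVec x₂) :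
    ∃ α β : ℝ, 0 < α ∧ 0 < β ∧
      (α • vecMulVec x₁ x₁ + β • vecMulVec x₂ x₂).PosSemidef ∧
      (A₁ * (α • vecMulVec x₁ x₁ + β • vecMulVec x₂ x₂)).trace = 0 ∧
      (A₂ * (α • vecMulVec x₁ x₁ + β • vecMulVec x₂ x₂)).trace = 0 ∧
      (α • vecMulVec x₁ x₁ + β • vecMulVec x₂ x₂).trace = 1 ∧
      (A₀ * (α • vecMulVec x₁ x₁ + β • vecMulVec x₂ x₂)).trace = -μ₃ := by
  set Z := A₀ + μ₁ • A₁ + μ₂ • A₂ + μ₃ • (1 : Matrix (Fin n) (Fin n) ℝ)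
  have hker {x : Fin n → ℝ} (hx : x ∈ Submodule.span ℝ {x₁, x₂}) : Z *ᵥ x = 0 := by
    rwa [hnull, LinearMap.mem_ker, mulVecLin_apply] at hx
  have hZ₁ : Z *ᵥ x₁ = 0 := hker (Submodule.subset_span (by simp))
  have hZ₂ : Z *ᵥ x₂ = 0 := hker (Submodule.subset_span (by simp))
  obtain ⟨α, β, hα, hβ, hbalance, hone⟩ := exists_pos_mul_add_mul_eq_zero_and_eq_one h21 h22
    (dotProduct_self_pos_of_dotProduct_mulVec_ne_zero h21.ne)
    (dotProduct_self_pos_of_dotProduct_mulVec_ne_zero h22.ne')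
  have htr (A : Matrix (Fin n) (Fin n) ℝ) :=
    trace_mul_smul_vecMulVec_add_smul_vecMulVec A α β x₁ x₂
  have hX : (α • vecMulVec x₁ x₁ + β • vecMulVec x₂ x₂).trace = 1 := by
    rw [← Matrix.one_mul (α • _ + _), htr, ← hone]
    simp only [one_mulVec]
  have hA₀_eq : A₀ = Z - μ₁ • A₁ - μ₂ • A₂ - μ₃ • 1 := by
    simp only [Z]
    abel
  refine ⟨α, β, hα, hβ, posSemidef_smul_vecMulVec_add_smul_vecMulVec hα.le hβ.le x₁ x₂,
    by rw [htr, h11, h12, mul_zero, mul_zero, add_zero], by rw [htr, hbalance], hX, ?_⟩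
  rw [hA₀_eq]
  simp only [Matrix.sub_mul, trace_sub, Matrix.smul_mul, trace_smul, Matrix.one_mul, hX, htr,
    hZ₁, hZ₂, h11, h12, hbalance, dotProduct_zero, smul_eq_mul]
  ring

theorem stmt_17 (n : ℕ) (A₀ A₁ A₂ : Matrix (Fin n) (Fin n) ℝ)
    (hA₀ : A₀.IsSymm) (hA₁ : A₁.IsSymm) (hA₂ : A₂.IsSymm)
    (μ₁ μ₂ μ₃ : ℝ) (hμ₁ : 0 < μ₁) (hμ₂ : 0 < μ₂) (hμ₃ : 0 < μ₃)
    (x₁ x₂ : Fin n → ℝ)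
    (hZ : (A₀ + μ₁ • A₁ + μ₂ • A₂ + μ₃ • (1 : Matrix (Fin n) (Fin n) ℝ)).PosSemidef)
    (hnull : Submodule.span ℝ {x₁, x₂} =
      LinearMap.ker (A₀ + μ₁ • A₁ + μ₂ • A₂ + μ₃ • (1 : Matrix (Fin n) (Fin n) ℝ)).mulVecLin)
    (h11 : x₁ ⬝ᵥ A₁.mulVec x₁ = 0) (h12 : x₂ ⬝ᵥ A₁.mulVec x₂ = 0)
    (hcross : x₁ ⬝ᵥ A₁.mulVec x₂ ≠ 0)
    (h21 : x₁ ⬝ᵥ A₂.mulVec x₁ < 0) (h22 : 0 < x₂ ⬝ᵥ A₂.mulVec x₂) :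
    ∃ α β : ℝ, 0 < α ∧ 0 < β ∧
      (α • vecMulVec x₁ x₁ + β • vecMulVec x₂ x₂).PosSemidef ∧
      (A₁ * (α • vecMulVec x₁ x₁ + β • vecMulVec x₂ x₂)).trace = 0 ∧
      (A₂ * (α • vecMulVec x₁ x₁ + β • vecMulVec x₂ x₂)).trace = 0 ∧
      (α • vecMulVec x₁ x₁ + β • vecMulVec x₂ x₂).trace = 1 ∧
      (A₀ * (α • vecMulVec x₁ x₁ + β • vecMulVec x₂ x₂)).trace = -μ₃ :=
  stmt_17_general n A₀ A₁ A₂ μ₁ μ₂ μ₃ x₁ x₂ hnull h11 h12 h21 h22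
end

section
/- Let A_1, A_2 be real symmetric n×n matrices and suppose max{x^T A_1 x, x^T A_2 x} ≥ 0 for all x ∈ ℝ^n. Then there exist λ_1, λ_2 ≥ 0 with λ_1 + λ_2 = 1 such that λ_1 A_1 + λ_2 A_2 ⪰ 0. -/
/-!
Suppose no matrix of the pencil `M t = (1 - t) • A₁ + t • A₂`, `t ∈ [0, 1]`, is positive
semidefinite. Then `[0, 1]` is covered by the open sets `U i` of those `t` for which `M t` is
negative at some vector where the form of `Aᵢ` is negative, with `0 ∈ U 1` and `1 ∈ U 2`, so by
connectedness some `t` lies in both. Take witnesses `y ∈ U 1`, `x ∈ U 2` at this `t`, with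
`x ⬝ᵥ M t *ᵥ y ≤ 0` after changing the sign of `y`. Then `M t` is negative on the whole segment
from `x` to `y`, so at each point of it one of the two forms is negative; the form of `A₂` is
negative at `x` and that of `A₁` at `y`, and connectedness of the segment yields a vector where
both are negative, against the hypothesis.
-/
open Matrix Set

theorem IsPreconnected.exists_neg_and_neg {X : Type*} [TopologicalSpace X] {s : Set X}
    (hs : IsPreconnected s) {f g : X → ℝ} (hf : Continuous f) (hg : Continuous g)
    (hcover : ∀ x ∈ s, f x < 0 ∨ g x < 0) {a b : X} (ha : a ∈ s) (hfa : f a < 0)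
    (hb : b ∈ s) (hgb : g b < 0) : ∃ x ∈ s, f x < 0 ∧ g x < 0 :=
  hs _ _ (isOpen_lt hf continuous_const) (isOpen_lt hg continuous_const) hcover
    ⟨a, ha, hfa⟩ ⟨b, hb, hgb⟩

theorem neg_or_neg_of_convex_combination_neg {a b t : ℝ} (ht : t ∈ Icc (0 : ℝ) 1)
    (h : (1 - t) * a + t * b < 0) : a < 0 ∨ b < 0 := by
  by_contra! hab
  nlinarith [ht.1, ht.2]

section Quadratic

variable {ι : Type*} [Fintype ι]

theorem Matrix.IsSymm.dotProduct_mulVec_comm {A : Matrix ι ι ℝ} (hA : A.IsSymm) (x y : ι → ℝ) :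
    x ⬝ᵥ A *ᵥ y = y ⬝ᵥ A *ᵥ x := by
  rw [dotProduct_mulVec, ← mulVec_transpose, hA, dotProduct_comm]

theorem Matrix.IsSymm.dotProduct_mulVec_smul_add_smul {A : Matrix ι ι ℝ} (hA : A.IsSymm)
    (x y : ι → ℝ) (a b : ℝ) :
    (a • x + b • y) ⬝ᵥ A *ᵥ (a • x + b • y) =
      a ^ 2 * (x ⬝ᵥ A *ᵥ x) + 2 * a * b * (x ⬝ᵥ A *ᵥ y) + b ^ 2 * (y ⬝ᵥ A *ᵥ y) := by
  simp only [mulVec_add, mulVec_smul, dotProduct_add, add_dotProduct, dotProduct_smul,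
    smul_dotProduct, smul_eq_mul, hA.dotProduct_mulVec_comm y x]
  ring

theorem Matrix.IsSymm.exists_dotProduct_mulVec_neg {A : Matrix ι ι ℝ} (hA : A.IsSymm)
    (h : ¬ A.PosSemidef) : ∃ x, x ⬝ᵥ A *ᵥ x < 0 := by
  simp only [posSemidef_iff_dotProduct_mulVec, isHermitian_iff_isSymm, star_trivial,
    not_and, not_forall, not_le] at h
  exact h hA

theorem Matrix.IsSymm.dotProduct_mulVec_segment_neg {A : Matrix ι ι ℝ} (hA : A.IsSymm)
    {x y : ι → ℝ} (hx : x ⬝ᵥ A *ᵥ x < 0) (hy : y ⬝ᵥ A *ᵥ y < 0) (hxy : x ⬝ᵥ A *ᵥ y ≤ 0)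
    {θ : ℝ} (hθ : θ ∈ Icc (0 : ℝ) 1) :
    ((1 - θ) • x + θ • y) ⬝ᵥ A *ᵥ ((1 - θ) • x + θ • y) < 0 := by
  rw [hA.dotProduct_mulVec_smul_add_smul]
  set m := max (x ⬝ᵥ A *ᵥ x) (y ⬝ᵥ A *ᵥ y)
  have hcross : 2 * (1 - θ) * θ * (x ⬝ᵥ A *ᵥ y) ≤ 0 :=
    mul_nonpos_of_nonneg_of_nonpos (by nlinarith [hθ.1, hθ.2]) hxy
  have hsq : 0 < (1 - θ) ^ 2 + θ ^ 2 := by nlinarith [hθ.1, hθ.2]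
  linarith [mul_le_mul_of_nonneg_left (le_max_left _ _ : x ⬝ᵥ A *ᵥ x ≤ m) (sq_nonneg (1 - θ)),
    mul_le_mul_of_nonneg_left (le_max_right _ _ : y ⬝ᵥ A *ᵥ y ≤ m) (sq_nonneg θ),
    mul_neg_of_pos_of_neg hsq (max_lt hx hy)]

end Quadratic

section Pencil

variable {ι : Type*}

def pencil (A₁ A₂ : Matrix ι ι ℝ) (t : ℝ) : Matrix ι ι ℝ := (1 - t) • A₁ + t • A₂

theorem pencil_isSymm {A₁ A₂ : Matrix ι ι ℝ} (hA₁ : A₁.IsSymm) (hA₂ : A₂.IsSymm) (t : ℝ) :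
    (pencil A₁ A₂ t).IsSymm :=
  (hA₁.smul _).add (hA₂.smul _)

variable [Fintype ι]

theorem dotProduct_pencil_mulVec (A₁ A₂ : Matrix ι ι ℝ) (t : ℝ) (x : ι → ℝ) :
    x ⬝ᵥ pencil A₁ A₂ t *ᵥ x = (1 - t) * (x ⬝ᵥ A₁ *ᵥ x) + t * (x ⬝ᵥ A₂ *ᵥ x) := by
  simp only [pencil, add_mulVec, smul_mulVec, dotProduct_add, dotProduct_smul, smul_eq_mul]

def pencilNegSet (A₁ A₂ B : Matrix ι ι ℝ) : Set ℝ :=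
  {t | ∃ x, x ⬝ᵥ B *ᵥ x < 0 ∧ x ⬝ᵥ pencil A₁ A₂ t *ᵥ x < 0}

variable {A₁ A₂ : Matrix ι ι ℝ}

theorem isOpen_pencilNegSet (B : Matrix ι ι ℝ) : IsOpen (pencilNegSet A₁ A₂ B) := by
  have hU : pencilNegSet A₁ A₂ B =
      ⋃ x ∈ {x | x ⬝ᵥ B *ᵥ x < 0}, {t | x ⬝ᵥ pencil A₁ A₂ t *ᵥ x < 0} := by
    ext t
    simp [pencilNegSet]
  rw [hU]
  refine isOpen_biUnion fun x _ => isOpen_lt ?_ continuous_const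
  simp only [dotProduct_pencil_mulVec]
  fun_prop

theorem zero_mem_pencilNegSet (hA₁ : A₁.IsSymm) (h : ¬ A₁.PosSemidef) :
    (0 : ℝ) ∈ pencilNegSet A₁ A₂ A₁ := by
  obtain ⟨x, hx⟩ := hA₁.exists_dotProduct_mulVec_neg h
  exact ⟨x, hx, by simpa [dotProduct_pencil_mulVec] using hx⟩

theorem one_mem_pencilNegSet (hA₂ : A₂.IsSymm) (h : ¬ A₂.PosSemidef) :
    (1 : ℝ) ∈ pencilNegSet A₁ A₂ A₂ := by
  obtain ⟨x, hx⟩ := hA₂.exists_dotProduct_mulVec_neg h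
  exact ⟨x, hx, by simpa [dotProduct_pencil_mulVec] using hx⟩

theorem mem_pencilNegSet_union (hA₁ : A₁.IsSymm) (hA₂ : A₂.IsSymm) {t : ℝ}
    (ht : t ∈ Icc (0 : ℝ) 1) (h : ¬ (pencil A₁ A₂ t).PosSemidef) :
    t ∈ pencilNegSet A₁ A₂ A₁ ∪ pencilNegSet A₁ A₂ A₂ := by
  obtain ⟨x, hx⟩ := (pencil_isSymm hA₁ hA₂ t).exists_dotProduct_mulVec_neg h
  rcases neg_or_neg_of_convex_combination_neg ht (dotProduct_pencil_mulVec A₁ A₂ t x ▸ hx)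
    with h₁ | h₂
  · exact Or.inl ⟨x, h₁, hx⟩
  · exact Or.inr ⟨x, h₂, hx⟩

theorem notMem_pencilNegSet_inter (hA₁ : A₁.IsSymm) (hA₂ : A₂.IsSymm)
    (hmax : ∀ x : ι → ℝ, 0 ≤ max (x ⬝ᵥ A₁ *ᵥ x) (x ⬝ᵥ A₂ *ᵥ x)) {t : ℝ}
    (ht : t ∈ Icc (0 : ℝ) 1) : t ∉ pencilNegSet A₁ A₂ A₁ ∩ pencilNegSet A₁ A₂ A₂ := by
  rintro ⟨⟨y, hy₁, hyM⟩, ⟨x, hx₂, hxM⟩⟩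
  set M := pencil A₁ A₂ t
  obtain ⟨y, hy₁, hyM, hxy⟩ :
      ∃ y, y ⬝ᵥ A₁ *ᵥ y < 0 ∧ y ⬝ᵥ M *ᵥ y < 0 ∧ x ⬝ᵥ M *ᵥ y ≤ 0 := by
    rcases le_or_gt (x ⬝ᵥ M *ᵥ y) 0 with h | h
    · exact ⟨y, hy₁, hyM, h⟩
    · exact ⟨-y, by simpa [mulVec_neg] using hy₁, by simpa [mulVec_neg] using hyM,
      by simpa [mulVec_neg] using h.le⟩
  set z : ℝ → ι → ℝ := fun θ => (1 - θ) • x + θ • y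
  have hz : ∀ θ ∈ Icc (0 : ℝ) 1, z θ ⬝ᵥ A₁ *ᵥ z θ < 0 ∨ z θ ⬝ᵥ A₂ *ᵥ z θ < 0 := fun θ hθ =>
    neg_or_neg_of_convex_combination_neg ht <| dotProduct_pencil_mulVec A₁ A₂ t (z θ) ▸
      (pencil_isSymm hA₁ hA₂ t).dotProduct_mulVec_segment_neg hxM hyM hxy hθ
  obtain ⟨θ, -, h₁, h₂⟩ := isPreconnected_Icc.exists_neg_and_neg (by fun_prop) (by fun_prop) hz
    (right_mem_Icc.2 zero_le_one) (by simpa [z] using hy₁)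
    (left_mem_Icc.2 zero_le_one) (by simpa [z] using hx₂)
  exact (hmax (z θ)).not_gt (max_lt h₁ h₂)

theorem exists_posSemidef_pencil (hA₁ : A₁.IsSymm) (hA₂ : A₂.IsSymm)
    (hmax : ∀ x : ι → ℝ, 0 ≤ max (x ⬝ᵥ A₁ *ᵥ x) (x ⬝ᵥ A₂ *ᵥ x)) :
    ∃ t ∈ Icc (0 : ℝ) 1, (pencil A₁ A₂ t).PosSemidef := by
  by_contra! h
  have h₀ : ¬ A₁.PosSemidef := by simpa [pencil] using h 0 (left_mem_Icc.2 zero_le_one)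
  have h₁ : ¬ A₂.PosSemidef := by simpa [pencil] using h 1 (right_mem_Icc.2 zero_le_one)
  obtain ⟨t, ht, hmem⟩ := isPreconnected_Icc _ _ (isOpen_pencilNegSet A₁) (isOpen_pencilNegSet A₂)
    (fun t ht => mem_pencilNegSet_union hA₁ hA₂ ht (h t ht))
    ⟨0, left_mem_Icc.2 zero_le_one, zero_mem_pencilNegSet hA₁ h₀⟩
    ⟨1, right_mem_Icc.2 zero_le_one, one_mem_pencilNegSet hA₂ h₁⟩
  exact notMem_pencilNegSet_inter hA₁ hA₂ hmax ht hmem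

end Pencil

theorem stmt_19 (n : ℕ) (A₁ A₂ : Matrix (Fin n) (Fin n) ℝ)
    (hA₁ : A₁.IsSymm) (hA₂ : A₂.IsSymm)
    (hmax : ∀ x : Fin n → ℝ, 0 ≤ max (x ⬝ᵥ A₁.mulVec x) (x ⬝ᵥ A₂.mulVec x)) :
    ∃ l₁ l₂ : ℝ, 0 ≤ l₁ ∧ 0 ≤ l₂ ∧ l₁ + l₂ = 1 ∧
      (l₁ • A₁ + l₂ • A₂).PosSemidef := by
  obtain ⟨t, ht, hpsd⟩ := exists_posSemidef_pencil hA₁ hA₂ hmax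
  exact ⟨1 - t, t, sub_nonneg.2 ht.2, ht.1, sub_add_cancel 1 t, hpsd⟩
end
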